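/- arXiv:2509.08645 — 10 statements merged into one kernel-verified Lean document; each statement's English description precedes it below -/
import Mathlib

section
/- Let G : Z → Z' be Lipschitz continuous with constant L > 0 and strongly monotone with constant m > 0. Then G is bijective and its inverse G⁻¹ : Z' → Z is Lipschitz continuous with constant 1/m, i.e. ‖G⁻¹ f − G⁻¹ g‖_Z ≤ (1/m)·‖f − g‖_{Z'} for all f, g ∈ Z'. -/
/-!
Strong monotonicity and `(G w - G v) (w - v) ≤ ‖G w - G v‖ ‖w - v‖` give
`m ‖w - v‖ ≤ ‖G w - G v‖`: this is injectivity, and the bound `1 / m` for the inverse.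
Surjectivity is Zarantonello's argument: through the Riesz isomorphism `J`, `A = J⁻¹ ∘ G` is a
Lipschitz, strongly monotone map of `Z` to itself, and for `ρ = m / L²` the map
`w ↦ w - ρ (A w - y)` is a contraction with constant `√(1 - (m / L)²)`, whose fixed point solves
`A w = y`.
-/

open scoped InnerProductSpace

section StronglyMonotone

variable {E : Type*} [SeminormedAddCommGroup E] [NormedSpace ℝ E]

theorem mul_norm_sub_le_norm_sub_of_stronglyMonotone {G : E → StrongDual ℝ E} {m : ℝ}
    (hmono : ∀ w v : E, (G w - G v) (w - v) ≥ m * ‖w - v‖ ^ 2) (w v : E) :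
    m * ‖w - v‖ ≤ ‖G w - G v‖ := by
  rcases (norm_nonneg (w - v)).eq_or_lt with h | h
  · rw [← h, mul_zero]
    exact norm_nonneg _
  · refine le_of_mul_le_mul_right ?_ h
    calc m * ‖w - v‖ * ‖w - v‖ = m * ‖w - v‖ ^ 2 := by ring
      _ ≤ (G w - G v) (w - v) := hmono w v
      _ ≤ ‖(G w - G v) (w - v)‖ := Real.le_norm_self _
      _ ≤ ‖G w - G v‖ * ‖w - v‖ := (G w - G v).le_opNorm _

end StronglyMonotone

theorem injective_of_stronglyMonotone {E : Type*} [NormedAddCommGroup E] [NormedSpace ℝ E]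
    {G : E → StrongDual ℝ E} {m : ℝ} (hm : 0 < m)
    (hmono : ∀ w v : E, (G w - G v) (w - v) ≥ m * ‖w - v‖ ^ 2) :
    Function.Injective G := by
  intro w v h
  have hle := mul_norm_sub_le_norm_sub_of_stronglyMonotone hmono w v
  rw [h, sub_self, norm_zero] at hle
  have hnorm : ‖w - v‖ ≤ 0 := nonpos_of_mul_nonpos_right hle hm
  exact sub_eq_zero.mp (norm_le_zero_iff.mp hnorm)

section Zarantonello

variable {E : Type*} [NormedAddCommGroup E] [InnerProductSpace ℝ E]
  {A : E → E} {L m : ℝ}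

theorem norm_sub_smul_sub_sq_le (hlip : ∀ w v : E, ‖A w - A v‖ ≤ L * ‖w - v‖)
    (hmono : ∀ w v : E, m * ‖w - v‖ ^ 2 ≤ ⟪A w - A v, w - v⟫_ℝ) {ρ : ℝ} (hρ : 0 ≤ ρ) (w v : E) :
    ‖(w - ρ • A w) - (v - ρ • A v)‖ ^ 2 ≤ (1 - 2 * ρ * m + ρ ^ 2 * L ^ 2) * ‖w - v‖ ^ 2 := by
  have hsub : (w - ρ • A w) - (v - ρ • A v) = (w - v) - ρ • (A w - A v) := by
    rw [smul_sub]; abel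
  have hlip_sq : ‖A w - A v‖ ^ 2 ≤ L ^ 2 * ‖w - v‖ ^ 2 := by
    rw [← mul_pow]
    exact pow_le_pow_left₀ (norm_nonneg _) (hlip w v) 2
  rw [hsub, norm_sub_sq_real, real_inner_smul_right, real_inner_comm, norm_smul, mul_pow,
    Real.norm_eq_abs, sq_abs]
  nlinarith [mul_le_mul_of_nonneg_left (hmono w v) hρ,
    mul_le_mul_of_nonneg_left hlip_sq (sq_nonneg ρ)]

theorem contractingWith_sub_smul_sub (hL : 0 < L) (hm : 0 < m)
    (hlip : ∀ w v : E, ‖A w - A v‖ ≤ L * ‖w - v‖)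
    (hmono : ∀ w v : E, m * ‖w - v‖ ^ 2 ≤ ⟪A w - A v, w - v⟫_ℝ) (y : E) :
    ContractingWith ⟨√(1 - (m / L) ^ 2), Real.sqrt_nonneg _⟩
      (fun w => w - (m / L ^ 2) • (A w - y)) := by
  constructor
  · change √(1 - (m / L) ^ 2) < 1
    rw [Real.sqrt_lt' one_pos]
    have : 0 < (m / L) ^ 2 := by positivity
    linarith
  · refine LipschitzWith.of_dist_le_mul fun w v => ?_
    have hsq := norm_sub_smul_sub_sq_le (A := fun w => A w - y)
      (fun w v => by simpa only [sub_sub_sub_cancel_right] using hlip w v)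
      (fun w v => by simpa only [sub_sub_sub_cancel_right] using hmono w v)
      (by positivity : 0 ≤ m / L ^ 2) w v
    have hfactor : 1 - 2 * (m / L ^ 2) * m + (m / L ^ 2) ^ 2 * L ^ 2 = 1 - (m / L) ^ 2 := by
      field_simp; ring
    rw [hfactor] at hsq
    rw [dist_eq_norm, dist_eq_norm]
    change ‖(_ : E)‖ ≤ √(1 - (m / L) ^ 2) * ‖w - v‖
    rw [← Real.sqrt_sq (norm_nonneg _), ← Real.sqrt_sq (norm_nonneg (w - v)),
      ← Real.sqrt_mul' _ (sq_nonneg _)]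
    exact Real.sqrt_le_sqrt hsq

theorem surjective_of_lipschitz_of_stronglyMonotone [CompleteSpace E] (hL : 0 < L) (hm : 0 < m)
    (hlip : ∀ w v : E, ‖A w - A v‖ ≤ L * ‖w - v‖)
    (hmono : ∀ w v : E, m * ‖w - v‖ ^ 2 ≤ ⟪A w - A v, w - v⟫_ℝ) :
    Function.Surjective A := by
  intro y
  obtain ⟨w, hw, -⟩ :=
    (contractingWith_sub_smul_sub hL hm hlip hmono y).exists_fixedPoint 0 (edist_ne_top _ _)
  have hstep : (m / L ^ 2) • (A w - y) = 0 := sub_eq_self.mp hw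
  exact ⟨w, sub_eq_zero.mp ((smul_eq_zero.mp hstep).resolve_left (by positivity))⟩

theorem surjective_of_lipschitz_of_stronglyMonotone_dual [CompleteSpace E]
    {G : E → StrongDual ℝ E} (hL : 0 < L) (hm : 0 < m)
    (hlip : ∀ w v : E, ‖G w - G v‖ ≤ L * ‖w - v‖)
    (hmono : ∀ w v : E, (G w - G v) (w - v) ≥ m * ‖w - v‖ ^ 2) :
    Function.Surjective G := by
  let J := InnerProductSpace.toDual ℝ E
  have hA : Function.Surjective (J.symm ∘ G) := by
    refine surjective_of_lipschitz_of_stronglyMonotone hL hm (fun w v => ?_) (fun w v => ?_)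
    · simpa only [Function.comp_apply, ← map_sub, LinearIsometryEquiv.norm_map] using hlip w v
    · rw [Function.comp_apply, Function.comp_apply, ← map_sub, InnerProductSpace.toDual_symm_apply]
      exact hmono w v
  simpa only [← Function.comp_assoc, LinearIsometryEquiv.self_comp_symm, Function.id_comp]
    using J.surjective.comp hA

end Zarantonello

/-- A Lipschitz continuous and strongly monotone operator `G : Z → Z'` on a real
Hilbert space `Z` is bijective, with inverse that is Lipschitz continuous with
constant `1/m`. -/
theorem lipschitz_stronglyMonotone_inverse_lipschitz
    {Z : Type*} [NormedAddCommGroup Z] [InnerProductSpace ℝ Z] [CompleteSpace Z]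
    (G : Z → StrongDual ℝ Z) (L m : ℝ) (hL : 0 < L) (hm : 0 < m)
    (hlip : ∀ w v : Z, ‖G w - G v‖ ≤ L * ‖w - v‖)
    (hmono : ∀ w v : Z, (G w - G v) (w - v) ≥ m * ‖w - v‖ ^ 2) :
    Function.Bijective G ∧
      ∀ f g : StrongDual ℝ Z,
        ‖Function.invFun G f - Function.invFun G g‖ ≤ (1 / m) * ‖f - g‖ := by
  have hsurj := surjective_of_lipschitz_of_stronglyMonotone_dual hL hm hlip hmono
  refine ⟨⟨injective_of_stronglyMonotone hm hmono, hsurj⟩, fun f g => ?_⟩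
  have hle := mul_norm_sub_le_norm_sub_of_stronglyMonotone hmono
    (Function.invFun G f) (Function.invFun G g)
  rw [Function.invFun_eq (hsurj f), Function.invFun_eq (hsurj g)] at hle
  rw [one_div, inv_mul_eq_div, le_div_iff₀ hm, mul_comm]
  exact hle
end

section
/- Let G : Z → Z' be Lipschitz continuous with constant L > 0 and strongly monotone with constant m > 0, let Z⁰ ⊆ Z be a closed subspace, let u ∈ Z satisfy G u = 0, and let u⁰ ∈ Z⁰ satisfy the Galerkin equations (G u⁰)(v) = 0 for all v ∈ Z⁰. Then the Galerkin approximation is quasi-best: ‖u − u⁰‖_Z ≤ (1 + L/m)·inf_{z ∈ Z⁰} ‖u − z‖_Z. -/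
open NormedSpace

section Galerkin

variable {E : Type*} [SeminormedAddCommGroup E] [NormedSpace ℝ E]

/-- Galerkin orthogonality: the residual `G u - G u₀` annihilates `Z₀`. -/
theorem galerkin_residual_apply_sub_eq (G : E → StrongDual ℝ E) (Z₀ : Submodule ℝ E)
    {u u₀ z : E} (hu : G u = 0) (hu₀ : u₀ ∈ Z₀) (hGal : ∀ v ∈ Z₀, G u₀ v = 0) (hz : z ∈ Z₀) :
    (G u - G u₀) (u - u₀) = (G u - G u₀) (u - z) := by
  have horth : (G u - G u₀) (z - u₀) = 0 := by
    simp [hu, hGal _ (Z₀.sub_mem hz hu₀)]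
  rw [← sub_add_sub_cancel u z u₀, map_add, horth, add_zero]

theorem norm_sub_le_div_mul_norm_sub_of_galerkin (G : E → StrongDual ℝ E) {L m : ℝ}
    (hL : 0 ≤ L) (hm : 0 < m)
    (hlip : ∀ w v : E, ‖G w - G v‖ ≤ L * ‖w - v‖)
    (hmono : ∀ w v : E, (G w - G v) (w - v) ≥ m * ‖w - v‖ ^ 2)
    (Z₀ : Submodule ℝ E) {u u₀ z : E} (hu : G u = 0) (hu₀ : u₀ ∈ Z₀)
    (hGal : ∀ v ∈ Z₀, G u₀ v = 0) (hz : z ∈ Z₀) :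
    ‖u - u₀‖ ≤ L / m * ‖u - z‖ := by
  have hsq : m * ‖u - u₀‖ ^ 2 ≤ L * ‖u - u₀‖ * ‖u - z‖ :=
    calc m * ‖u - u₀‖ ^ 2
        ≤ (G u - G u₀) (u - u₀) := hmono u u₀
      _ = (G u - G u₀) (u - z) := galerkin_residual_apply_sub_eq G Z₀ hu hu₀ hGal hz
      _ ≤ ‖G u - G u₀‖ * ‖u - z‖ := (le_abs_self _).trans ((G u - G u₀).le_opNorm _)
      _ ≤ L * ‖u - u₀‖ * ‖u - z‖ := by gcongr; exact hlip u u₀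
  rcases (norm_nonneg (u - u₀)).eq_or_lt with h0 | hpos
  · rw [← h0]
    positivity
  · rw [div_mul_eq_mul_div, le_div_iff₀ hm]
    nlinarith

end Galerkin

theorem galerkin_quasi_best_general
    {Z : Type*} [NormedAddCommGroup Z] [InnerProductSpace ℝ Z]
    (G : Z → StrongDual ℝ Z) (L m : ℝ) (hL : 0 < L) (hm : 0 < m)
    (hlip : ∀ w v : Z, ‖G w - G v‖ ≤ L * ‖w - v‖)
    (hmono : ∀ w v : Z, (G w - G v) (w - v) ≥ m * ‖w - v‖ ^ 2)
    (Z₀ : Submodule ℝ Z)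
    (u : Z) (hu : G u = 0)
    (u₀ : Z) (hu₀ : u₀ ∈ Z₀) (hGal : ∀ v ∈ Z₀, (G u₀) v = 0) :
    ‖u - u₀‖ ≤ (1 + L / m) * ⨅ z : Z₀, ‖u - (z : Z)‖ := by
  have hcea (z : Z₀) : ‖u - u₀‖ ≤ L / m * ‖u - (z : Z)‖ :=
    norm_sub_le_div_mul_norm_sub_of_galerkin G hL.le hm hlip hmono Z₀ hu hu₀ hGal z.2
  calc ‖u - u₀‖ ≤ L / m * ⨅ z : Z₀, ‖u - (z : Z)‖ := by
        rw [Real.mul_iInf_of_nonneg (by positivity)]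
        exact le_ciInf hcea
    _ ≤ (1 + L / m) * ⨅ z : Z₀, ‖u - (z : Z)‖ := by
        gcongr
        · exact Real.iInf_nonneg fun _ => norm_nonneg _
        · linarith

/-- Quasi-optimality of Galerkin approximations for Lipschitz continuous and
strongly monotone operators (Céa-type lemma). -/
theorem galerkin_quasi_best
    {Z : Type*} [NormedAddCommGroup Z] [InnerProductSpace ℝ Z] [CompleteSpace Z]
    (G : Z → StrongDual ℝ Z) (L m : ℝ) (hL : 0 < L) (hm : 0 < m)
    (hlip : ∀ w v : Z, ‖G w - G v‖ ≤ L * ‖w - v‖)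
    (hmono : ∀ w v : Z, (G w - G v) (w - v) ≥ m * ‖w - v‖ ^ 2)
    (Z₀ : Submodule ℝ Z) (hZ₀ : IsClosed (Z₀ : Set Z))
    (u : Z) (hu : G u = 0)
    (u₀ : Z) (hu₀ : u₀ ∈ Z₀) (hGal : ∀ v ∈ Z₀, (G u₀) v = 0) :
    ‖u - u₀‖ ≤ (1 + L / m) * ⨅ z : Z₀, ‖u - (z : Z)‖ :=
  galerkin_quasi_best_general G L m hL hm hlip hmono Z₀ u hu u₀ hu₀ hGal
end

section
/- For every (f, g) ∈ Y' × X', the Schur operator S : X → X' is Lipschitz continuous with constant L_S = max(1, L_A, 1/m_A), i.e. ‖S w − S z‖_{X'} ≤ L_S ‖w − z‖_X for all w, z ∈ X, and strongly monotone with constant m_S = min(1, m_A, m_A/L_A²), i.e. (S w − S z)(w − z) ≥ m_S ‖w − z‖_X² for all w, z ∈ X. -/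
/-!
Writing `u = w - z`, the functional `(S w - S z) x` is the sum of `(A (E w) - A (E z)) (E x)`,
`⟪Γ u, Γ x⟫` and `(D x) (A⁻¹ (f - D z) - A⁻¹ (f - D w))`. Strong monotonicity of `A` makes `A⁻¹`
`1/m_A`-Lipschitz, and together with the Lipschitz bound it makes `A⁻¹` strongly monotone with
constant `m_A / L_A²` (co-coercivity of `A`). So each summand is controlled by the matching
component of `u` and `x`, and the norm identity `‖x‖² = ‖E x‖² + ‖D x‖² + ‖Γ x‖²` reassembles the
three bounds, through Cauchy–Schwarz in `ℝ³` for the Lipschitz estimate.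
-/

open NormedSpace

section StronglyMonotone

variable {V : Type*} [NormedAddCommGroup V] [NormedSpace ℝ V]
  {A : V → StrongDual ℝ V} {B : StrongDual ℝ V → V} {m L : ℝ}

lemma mul_norm_sub_le_norm_sub_of_strongly_monotone {x y : V}
    (hmono : (A x - A y) (x - y) ≥ m * ‖x - y‖ ^ 2) :
    m * ‖x - y‖ ≤ ‖A x - A y‖ := by
  rcases (norm_nonneg (x - y)).eq_or_lt with h | h
  · rw [← h, mul_zero]
    exact norm_nonneg _
  · have : m * ‖x - y‖ ^ 2 ≤ ‖A x - A y‖ * ‖x - y‖ :=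
      hmono.trans ((le_abs_self _).trans ((A x - A y).le_opNorm _))
    nlinarith

lemma div_sq_mul_norm_sq_le_of_lipschitz_of_strongly_monotone {x y : V} (hm : 0 ≤ m)
    (hlip : ‖A x - A y‖ ≤ L * ‖x - y‖)
    (hmono : (A x - A y) (x - y) ≥ m * ‖x - y‖ ^ 2) :
    m / L ^ 2 * ‖A x - A y‖ ^ 2 ≤ (A x - A y) (x - y) :=
  calc m / L ^ 2 * ‖A x - A y‖ ^ 2
      ≤ m / L ^ 2 * (L * ‖x - y‖) ^ 2 := by gcongr
    _ = m * (L ^ 2 / L ^ 2) * ‖x - y‖ ^ 2 := by ring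
    _ ≤ m * 1 * ‖x - y‖ ^ 2 := by gcongr; exact div_self_le_one _
    _ ≤ (A x - A y) (x - y) := by rw [mul_one]; exact hmono

variable (hB : Function.RightInverse B A)
include hB

lemma norm_sub_le_of_rightInverse_of_strongly_monotone (hm : 0 < m)
    (hmono : ∀ x y : V, (A x - A y) (x - y) ≥ m * ‖x - y‖ ^ 2) (p q : StrongDual ℝ V) :
    ‖B p - B q‖ ≤ 1 / m * ‖p - q‖ := by
  have := mul_norm_sub_le_norm_sub_of_strongly_monotone (hmono (B p) (B q))
  rw [hB p, hB q] at this
  rw [one_div_mul_eq_div, le_div_iff₀ hm]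
  linarith

lemma div_sq_mul_norm_sq_le_of_rightInverse (hm : 0 ≤ m)
    (hlip : ∀ x y : V, ‖A x - A y‖ ≤ L * ‖x - y‖)
    (hmono : ∀ x y : V, (A x - A y) (x - y) ≥ m * ‖x - y‖ ^ 2) (p q : StrongDual ℝ V) :
    m / L ^ 2 * ‖p - q‖ ^ 2 ≤ (p - q) (B p - B q) := by
  have := div_sq_mul_norm_sq_le_of_lipschitz_of_strongly_monotone hm
    (hlip (B p) (B q)) (hmono (B p) (B q))
  rwa [hB p, hB q] at this

end StronglyMonotone

lemma mul_add_mul_add_mul_le_mul {a b c a' b' c' r s : ℝ} (hr : 0 ≤ r) (hs : 0 ≤ s)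
    (hr2 : r ^ 2 = a ^ 2 + b ^ 2 + c ^ 2) (hs2 : s ^ 2 = a' ^ 2 + b' ^ 2 + c' ^ 2) :
    a * a' + b * b' + c * c' ≤ r * s := by
  refine le_of_sq_le_sq ?_ (mul_nonneg hr hs)
  rw [mul_pow, hr2, hs2]
  nlinarith [sq_nonneg (a * b' - b * a'), sq_nonneg (a * c' - c * a'),
    sq_nonneg (b * c' - c * b')]

section Schur

variable {Y X H : Type*} [NormedAddCommGroup Y] [NormedSpace ℝ Y]
  [NormedAddCommGroup X] [NormedSpace ℝ X]
  [NormedAddCommGroup H] [InnerProductSpace ℝ H] [CompleteSpace H]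
  (E : X →L[ℝ] Y) (D : X →L[ℝ] StrongDual ℝ Y) (Γt : X →L[ℝ] H)
  (A : Y → StrongDual ℝ Y) (Ainv : StrongDual ℝ Y → Y) (f : StrongDual ℝ Y) (g : StrongDual ℝ X)

noncomputable def schurOperator (z : X) : StrongDual ℝ X :=
  (A (E z)).comp E + (InnerProductSpace.toDual ℝ H (Γt z)).comp Γt + g -
    D.flip (Ainv (f - D z))

lemma schurOperator_sub_apply (w z x : X) :
    (schurOperator E D Γt A Ainv f g w - schurOperator E D Γt A Ainv f g z) x =
      (A (E w) - A (E z)) (E x) + inner ℝ (Γt (w - z)) (Γt x) +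
        D x (Ainv (f - D z) - Ainv (f - D w)) := by
  simp only [schurOperator, sub_apply, add_apply,
    ContinuousLinearMap.comp_apply, ContinuousLinearMap.flip_apply,
    InnerProductSpace.toDual_apply_apply, map_sub, inner_sub_left]
  ring

variable {E D Γt A Ainv} {LA mA : ℝ}
  (hnorm : ∀ x : X, ‖x‖ ^ 2 = ‖E x‖ ^ 2 + ‖D x‖ ^ 2 + ‖Γt x‖ ^ 2)
  (hAlip : ∀ w v : Y, ‖A w - A v‖ ≤ LA * ‖w - v‖)
  (hAmono : ∀ w v : Y, (A w - A v) (w - v) ≥ mA * ‖w - v‖ ^ 2)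
  (hAinv : Function.RightInverse Ainv A)
include hnorm hAlip hAmono hAinv

lemma norm_schurOperator_sub_le (hmA : 0 < mA) (w z : X) :
    ‖schurOperator E D Γt A Ainv f g w - schurOperator E D Γt A Ainv f g z‖ ≤
      max 1 (max LA (1 / mA)) * ‖w - z‖ := by
  set M := max 1 (max LA (1 / mA))
  have hM1 : 1 ≤ M := le_max_left _ _
  have hMLA : LA ≤ M := (le_max_left _ _).trans (le_max_right _ _)
  have hMmA : 1 / mA ≤ M := (le_max_right _ _).trans (le_max_right _ _)
  refine ContinuousLinearMap.opNorm_le_bound _ (by positivity) fun x => ?_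
  rw [schurOperator_sub_apply]
  have hE : ‖(A (E w) - A (E z)) (E x)‖ ≤ LA * ‖E (w - z)‖ * ‖E x‖ :=
    ((A (E w) - A (E z)).le_opNorm _).trans (by rw [map_sub]; gcongr; exact hAlip _ _)
  have hΓ : ‖inner ℝ (Γt (w - z)) (Γt x)‖ ≤ ‖Γt (w - z)‖ * ‖Γt x‖ := norm_inner_le_norm _ _
  have hD : ‖D x (Ainv (f - D z) - Ainv (f - D w))‖ ≤ 1 / mA * ‖D (w - z)‖ * ‖D x‖ :=
    calc ‖D x (Ainv (f - D z) - Ainv (f - D w))‖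
        ≤ ‖D x‖ * ‖Ainv (f - D z) - Ainv (f - D w)‖ := (D x).le_opNorm _
      _ ≤ ‖D x‖ * (1 / mA * ‖(f - D z) - (f - D w)‖) := by
          gcongr
          exact norm_sub_le_of_rightInverse_of_strongly_monotone hAinv hmA hAmono _ _
      _ = 1 / mA * ‖D (w - z)‖ * ‖D x‖ := by
          rw [sub_sub_sub_cancel_left, ← map_sub]; ring
  have hCS := mul_add_mul_add_mul_le_mul (norm_nonneg (w - z)) (norm_nonneg x)
    (hnorm (w - z)) (hnorm x)
  have hEnn : 0 ≤ ‖E (w - z)‖ * ‖E x‖ := by positivity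
  have hDnn : 0 ≤ ‖D (w - z)‖ * ‖D x‖ := by positivity
  have hΓnn : 0 ≤ ‖Γt (w - z)‖ * ‖Γt x‖ := by positivity
  calc _ ≤ _ := norm_add₃_le
    _ ≤ LA * ‖E (w - z)‖ * ‖E x‖ + ‖Γt (w - z)‖ * ‖Γt x‖ + 1 / mA * ‖D (w - z)‖ * ‖D x‖ := by
        gcongr
    _ ≤ M * (‖E (w - z)‖ * ‖E x‖ + ‖D (w - z)‖ * ‖D x‖ + ‖Γt (w - z)‖ * ‖Γt x‖) := by
        nlinarith [mul_le_mul_of_nonneg_right hMLA hEnn, mul_le_mul_of_nonneg_right hMmA hDnn,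
          mul_le_mul_of_nonneg_right hM1 hΓnn]
    _ ≤ M * (‖w - z‖ * ‖x‖) := by gcongr
    _ = M * ‖w - z‖ * ‖x‖ := by ring

lemma schurOperator_sub_apply_sub_ge (hmA : 0 < mA) (w z : X) :
    (schurOperator E D Γt A Ainv f g w - schurOperator E D Γt A Ainv f g z) (w - z) ≥
      min 1 (min mA (mA / LA ^ 2)) * ‖w - z‖ ^ 2 := by
  set m := min 1 (min mA (mA / LA ^ 2))
  have hm1 : m ≤ 1 := min_le_left _ _
  have hmmA : m ≤ mA := (min_le_right _ _).trans (min_le_left _ _)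
  have hmL : m ≤ mA / LA ^ 2 := (min_le_right _ _).trans (min_le_right _ _)
  rw [schurOperator_sub_apply, real_inner_self_eq_norm_sq]
  have hE : mA * ‖E (w - z)‖ ^ 2 ≤ (A (E w) - A (E z)) (E (w - z)) := by
    rw [map_sub]; exact hAmono _ _
  have hD : mA / LA ^ 2 * ‖D (w - z)‖ ^ 2 ≤
      D (w - z) (Ainv (f - D z) - Ainv (f - D w)) := by
    have := div_sq_mul_norm_sq_le_of_rightInverse hAinv hmA.le hAlip hAmono (f - D z) (f - D w)
    rwa [sub_sub_sub_cancel_left, ← map_sub] at this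
  rw [hnorm (w - z)]
  nlinarith [mul_le_mul_of_nonneg_right hmmA (sq_nonneg ‖E (w - z)‖),
    mul_le_mul_of_nonneg_right hmL (sq_nonneg ‖D (w - z)‖),
    mul_le_mul_of_nonneg_right hm1 (sq_nonneg ‖Γt (w - z)‖)]

end Schur

theorem schur_lipschitz_stronglyMonotone_general
    {Y X H : Type*}
    [NormedAddCommGroup Y] [InnerProductSpace ℝ Y]
    [NormedAddCommGroup X] [InnerProductSpace ℝ X]
    [NormedAddCommGroup H] [InnerProductSpace ℝ H] [CompleteSpace H]
    (E : X →L[ℝ] Y) (D : X →L[ℝ] StrongDual ℝ Y) (Γt : X →L[ℝ] H)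
    (hnorm : ∀ x : X, ‖x‖ ^ 2 = ‖E x‖ ^ 2 + ‖D x‖ ^ 2 + ‖Γt x‖ ^ 2)
    (A : Y → StrongDual ℝ Y) (LA mA : ℝ) (hmA : 0 < mA)
    (hAlip : ∀ w v : Y, ‖A w - A v‖ ≤ LA * ‖w - v‖)
    (hAmono : ∀ w v : Y, (A w - A v) (w - v) ≥ mA * ‖w - v‖ ^ 2)
    (Ainv : StrongDual ℝ Y → Y)
    (hAinv₂ : ∀ f : StrongDual ℝ Y, A (Ainv f) = f)
    (f : StrongDual ℝ Y) (g : StrongDual ℝ X)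
    (S : X → StrongDual ℝ X)
    (hS : ∀ z : X, S z =
      (A (E z)).comp E + ((InnerProductSpace.toDual ℝ H (Γt z)).comp Γt) + g -
        D.flip (Ainv (f - D z))) :
    (∀ w z : X, ‖S w - S z‖ ≤ max 1 (max LA (1 / mA)) * ‖w - z‖) ∧
    (∀ w z : X,
      (S w - S z) (w - z) ≥ min 1 (min mA (mA / LA ^ 2)) * ‖w - z‖ ^ 2) := by
  obtain rfl : S = schurOperator E D Γt A Ainv f g := funext hS
  exact ⟨norm_schurOperator_sub_le f g hnorm hAlip hAmono hAinv₂ hmA,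
    schurOperator_sub_apply_sub_ge f g hnorm hAlip hAmono hAinv₂ hmA⟩

/-- The Schur operator `S : X → X'` is Lipschitz continuous with constant
`L_S = max(1, L_A, 1/m_A)` and strongly monotone with constant
`m_S = min(1, m_A, m_A/L_A²)`. -/
theorem schur_lipschitz_stronglyMonotone
    {Y X H : Type*}
    [NormedAddCommGroup Y] [InnerProductSpace ℝ Y] [CompleteSpace Y]
    [NormedAddCommGroup X] [InnerProductSpace ℝ X] [CompleteSpace X]
    [NormedAddCommGroup H] [InnerProductSpace ℝ H] [CompleteSpace H]
    (E : X →L[ℝ] Y) (D : X →L[ℝ] StrongDual ℝ Y) (Γt : X →L[ℝ] H)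
    (hnorm : ∀ x : X, ‖x‖ ^ 2 = ‖E x‖ ^ 2 + ‖D x‖ ^ 2 + ‖Γt x‖ ^ 2)
    (A : Y → StrongDual ℝ Y) (LA mA : ℝ) (hLA : 0 < LA) (hmA : 0 < mA)
    (hAlip : ∀ w v : Y, ‖A w - A v‖ ≤ LA * ‖w - v‖)
    (hAmono : ∀ w v : Y, (A w - A v) (w - v) ≥ mA * ‖w - v‖ ^ 2)
    (Ainv : StrongDual ℝ Y → Y)
    (hAinv₁ : ∀ y : Y, Ainv (A y) = y) (hAinv₂ : ∀ f : StrongDual ℝ Y, A (Ainv f) = f)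
    (f : StrongDual ℝ Y) (g : StrongDual ℝ X)
    (S : X → StrongDual ℝ X)
    (hS : ∀ z : X, S z =
      (A (E z)).comp E + ((InnerProductSpace.toDual ℝ H (Γt z)).comp Γt) + g -
        D.flip (Ainv (f - D z))) :
    (∀ w z : X, ‖S w - S z‖ ≤ max 1 (max LA (1 / mA)) * ‖w - z‖) ∧
    (∀ w z : X,
      (S w - S z) (w - z) ≥ min 1 (min mA (mA / LA ^ 2)) * ‖w - z‖ ^ 2) :=
  schur_lipschitz_stronglyMonotone_general E D Γt hnorm A LA mA hmA hAlip hAmono Ainv hAinv₂ f g S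
    hS
end

section
/- Let (ℓ, u₀) ∈ Y' × H and suppose u ∈ X satisfies B_e u = (ℓ, u₀). Then the pair (E u, u) ∈ Y × X solves N(E u, u) = (ℓ, g), where g ∈ X' is given by g(v) := −ℓ(E v) − ⟨u₀, Γ_0 v⟩_H; moreover, (E u, u) is the unique solution in Y × X of this equation. -/
/-!
For `p = (λ, w)` and `q = (λ', w')`, subtract the equations `N p = N q`, pair the first
component with `λ - λ'` and the second with `-(w - w')`: the terms coming from `D` and `D^⋆`
cancel, leaving `(A λ - A λ')(λ - λ') + (A (E w) - A (E w'))(E (w - w')) + ‖Γ_T (w - w')‖²`,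
a sum of nonnegative terms. So `N` is injective once `A` is strictly monotone and `E`, `D`, `Γ_T`
jointly separate points. That `(E u, u)` solves the system is the integration-by-parts identity
applied to `(D v)(E u)`.
-/

open scoped RealInnerProductSpace

section SystemMap

variable {Y X H : Type*}
  [NormedAddCommGroup Y] [NormedSpace ℝ Y]
  [NormedAddCommGroup X] [NormedSpace ℝ X]
  [NormedAddCommGroup H] [InnerProductSpace ℝ H] [CompleteSpace H]

noncomputable def systemMap (E : X →L[ℝ] Y) (D : X →L[ℝ] StrongDual ℝ Y) (Γt : X →L[ℝ] H)
    (A : Y → StrongDual ℝ Y) (p : Y × X) : StrongDual ℝ Y × StrongDual ℝ X :=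
  (A p.1 + D p.2,
    D.flip p.1 - (A (E p.2)).comp E - (InnerProductSpace.toDual ℝ H (Γt p.2)).comp Γt)

variable (E : X →L[ℝ] Y) (D : X →L[ℝ] StrongDual ℝ Y) (Γt : X →L[ℝ] H)
  (A : Y → StrongDual ℝ Y)

theorem systemMap_embed_apply_of_ibp (Γ0 : X →L[ℝ] H)
    (hIBP : ∀ u v : X, (D u) (E v) + (D v) (E u) + ⟪Γ0 u, Γ0 v⟫ = ⟪Γt u, Γt v⟫) (u : X) :
    systemMap E D Γt A (E u, u) =
      (D u + A (E u),
        -(D u + A (E u)).comp E - (InnerProductSpace.toDual ℝ H (Γ0 u)).comp Γ0) := by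
  refine Prod.ext (add_comm _ _) ?_
  ext v
  simp only [systemMap, sub_apply, neg_apply,
    add_apply, ContinuousLinearMap.coe_comp, Function.comp_apply,
    ContinuousLinearMap.flip_apply, InnerProductSpace.toDual_apply_apply]
  linarith [hIBP u v]

theorem systemMap_sub_apply_sub (p q : Y × X) :
    (systemMap E D Γt A p - systemMap E D Γt A q).1 (p.1 - q.1) -
        (systemMap E D Γt A p - systemMap E D Γt A q).2 (p.2 - q.2) =
      (A p.1 - A q.1) (p.1 - q.1) + (A (E p.2) - A (E q.2)) (E (p.2 - q.2)) +
        ‖Γt (p.2 - q.2)‖ ^ 2 := by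
  simp only [systemMap, Prod.fst_sub, Prod.snd_sub, sub_apply,
    add_apply, ContinuousLinearMap.coe_comp, Function.comp_apply,
    ContinuousLinearMap.flip_apply, InnerProductSpace.toDual_apply_apply, map_sub,
    ← real_inner_self_eq_norm_sq, inner_sub_left, inner_sub_right]
  ring

theorem systemMap_injective (hA : ∀ w v : Y, w ≠ v → 0 < (A w - A v) (w - v))
    (hsep : ∀ x : X, E x = 0 → D x = 0 → Γt x = 0 → x = 0) :
    Function.Injective (systemMap E D Γt A) := by
  intro p q hpq
  have hA_nonneg : ∀ w v : Y, 0 ≤ (A w - A v) (w - v) := fun w v => by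
    rcases eq_or_ne w v with rfl | hne
    · simp
    · exact (hA w v hne).le
  have hsum := systemMap_sub_apply_sub E D Γt A p q
  rw [hpq, sub_self, Prod.fst_zero, Prod.snd_zero, zero_apply,
    zero_apply, sub_zero, map_sub E] at hsum
  have h₁ := hA_nonneg p.1 q.1
  have h₂ := hA_nonneg (E p.2) (E q.2)
  have h₃ := sq_nonneg ‖Γt (p.2 - q.2)‖
  have hfst : p.1 = q.1 := by
    by_contra hne
    linarith [hA _ _ hne]
  have hE : E p.2 = E q.2 := by
    by_contra hne
    linarith [hA _ _ hne]
  have hΓt : Γt (p.2 - q.2) = 0 := by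
    rw [← norm_eq_zero, ← sq_eq_zero_iff]
    linarith
  have hD : D (p.2 - q.2) = 0 := by
    have hfst_eq : A p.1 + D p.2 = A q.1 + D q.2 := congrArg Prod.fst hpq
    rw [hfst, add_left_cancel_iff] at hfst_eq
    rw [map_sub, hfst_eq, sub_self]
  refine Prod.ext hfst (sub_eq_zero.mp (hsep _ ?_ hD hΓt))
  rw [map_sub, hE, sub_self]

end SystemMap

theorem pairing_pos_of_strongly_monotone {Y : Type*} [NormedAddCommGroup Y] [NormedSpace ℝ Y]
    {A : Y → StrongDual ℝ Y} {mA : ℝ} (hmA : 0 < mA)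
    (hAmono : ∀ w v : Y, (A w - A v) (w - v) ≥ mA * ‖w - v‖ ^ 2) {w v : Y} (hne : w ≠ v) :
    0 < (A w - A v) (w - v) :=
  lt_of_lt_of_le (by have := norm_pos_iff.mpr (sub_ne_zero.mpr hne); positivity) (hAmono w v)

theorem solution_of_system_general
    {Y X H : Type*}
    [NormedAddCommGroup Y] [InnerProductSpace ℝ Y]
    [NormedAddCommGroup X] [InnerProductSpace ℝ X]
    [NormedAddCommGroup H] [InnerProductSpace ℝ H] [CompleteSpace H]
    (E : X →L[ℝ] Y) (D : X →L[ℝ] StrongDual ℝ Y) (Γt : X →L[ℝ] H)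
    (hnorm : ∀ x : X, ‖x‖ ^ 2 = ‖E x‖ ^ 2 + ‖D x‖ ^ 2 + ‖Γt x‖ ^ 2)
    (A : Y → StrongDual ℝ Y) (mA : ℝ) (hmA : 0 < mA)
    (hAmono : ∀ w v : Y, (A w - A v) (w - v) ≥ mA * ‖w - v‖ ^ 2)
    (Γ0 : X →L[ℝ] H)
    (hIBP : ∀ u v : X,
      (D u) (E v) + (D v) (E u) + ⟪Γ0 u, Γ0 v⟫ = ⟪Γt u, Γt v⟫)
    (N : Y × X → StrongDual ℝ Y × StrongDual ℝ X)
    (hN : ∀ p : Y × X, N p =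
      (A p.1 + D p.2,
        D.flip p.1 - (A (E p.2)).comp E -
          ((InnerProductSpace.toDual ℝ H (Γt p.2)).comp Γt)))
    (ℓ : StrongDual ℝ Y) (u₀ : H) (u : X)
    (hBe : D u + A (E u) = ℓ ∧ Γ0 u = u₀)
    (g : StrongDual ℝ X)
    (hg : ∀ v : X, g v = -(ℓ (E v)) - ⟪u₀, Γ0 v⟫) :
    N (E u, u) = (ℓ, g) ∧ ∀ p : Y × X, N p = (ℓ, g) → p = (E u, u) := by
  have hN_eq : N = systemMap E D Γt A := funext hN
  have hg_eq : g = -ℓ.comp E - (InnerProductSpace.toDual ℝ H u₀).comp Γ0 := by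
    ext v
    simp [hg]
  have hsol : N (E u, u) = (ℓ, g) := by
    rw [hN_eq, systemMap_embed_apply_of_ibp E D Γt A Γ0 hIBP, hBe.1, hBe.2, hg_eq]
  have hsep : ∀ x : X, E x = 0 → D x = 0 → Γt x = 0 → x = 0 := fun x hE hD hΓt => by
    simpa [hE, hD, hΓt] using hnorm x
  refine ⟨hsol, fun p hp => ?_⟩
  rw [hN_eq] at hp hsol
  exact systemMap_injective E D Γt A
    (fun _ _ => pairing_pos_of_strongly_monotone hmA hAmono) hsep (hp.trans hsol.symm)

/-- If `B_e u = (ℓ, u₀)`, then `(E u, u)` is the unique solution of the system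
`N(λ, u) = (ℓ, g)` with `g(v) = −ℓ(E v) − ⟨u₀, Γ₀ v⟩_H`. -/
theorem solution_of_system
    {Y X H : Type*}
    [NormedAddCommGroup Y] [InnerProductSpace ℝ Y] [CompleteSpace Y]
    [NormedAddCommGroup X] [InnerProductSpace ℝ X] [CompleteSpace X]
    [NormedAddCommGroup H] [InnerProductSpace ℝ H] [CompleteSpace H]
    (E : X →L[ℝ] Y) (D : X →L[ℝ] StrongDual ℝ Y) (Γt : X →L[ℝ] H)
    (hnorm : ∀ x : X, ‖x‖ ^ 2 = ‖E x‖ ^ 2 + ‖D x‖ ^ 2 + ‖Γt x‖ ^ 2)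
    (A : Y → StrongDual ℝ Y) (LA mA : ℝ) (hLA : 0 < LA) (hmA : 0 < mA)
    (hAlip : ∀ w v : Y, ‖A w - A v‖ ≤ LA * ‖w - v‖)
    (hAmono : ∀ w v : Y, (A w - A v) (w - v) ≥ mA * ‖w - v‖ ^ 2)
    (Γ0 : X →L[ℝ] H)
    (hIBP : ∀ u v : X,
      (D u) (E v) + (D v) (E u) + ⟪Γ0 u, Γ0 v⟫ = ⟪Γt u, Γt v⟫)
    (N : Y × X → StrongDual ℝ Y × StrongDual ℝ X)
    (hN : ∀ p : Y × X, N p =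
      (A p.1 + D p.2,
        D.flip p.1 - (A (E p.2)).comp E -
          ((InnerProductSpace.toDual ℝ H (Γt p.2)).comp Γt)))
    (ℓ : StrongDual ℝ Y) (u₀ : H) (u : X)
    (hBe : D u + A (E u) = ℓ ∧ Γ0 u = u₀)
    (g : StrongDual ℝ X)
    (hg : ∀ v : X, g v = -(ℓ (E v)) - ⟪u₀, Γ0 v⟫) :
    N (E u, u) = (ℓ, g) ∧ ∀ p : Y × X, N p = (ℓ, g) → p = (E u, u) :=
  solution_of_system_general E D Γt hnorm A mA hmA hAmono Γ0 hIBP N hN ℓ u₀ u hBe g hg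
end

section
/- For every z ∈ X with E z ∈ Y^δ it holds that ‖Γ_0 z‖_H ≤ ‖z‖_{X,δ}. In particular, taking Y^δ = Y, every z ∈ X satisfies ‖Γ_0 z‖_H ≤ ‖z‖_X. -/
open NormedSpace
open scoped RealInnerProductSpace

/-!
Taking `u = v = z` in the integration-by-parts identity gives
`‖Γ₀ z‖² = ‖Γ_T z‖² - 2 (D z)(E z)`. When `E z ∈ Y^δ`, the pairing `(D z)(E z)` only sees the
restriction of `D z` to `Y^δ`, so `|(D z)(E z)| ≤ ‖(D z)|_{Y^δ}‖ ‖E z‖`, and `2ab ≤ a² + b²`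
bounds `‖Γ₀ z‖²` by `‖z‖²_{X,δ}`. With the full dual norm of `D z` the same estimate gives `‖z‖²_X`.
-/

theorem ContinuousLinearMap.norm_apply_le_norm_comp_subtypeL_mul_norm
    {𝕜 E F : Type*} [NontriviallyNormedField 𝕜]
    [SeminormedAddCommGroup E] [NormedSpace 𝕜 E] [SeminormedAddCommGroup F] [NormedSpace 𝕜 F]
    (f : E →L[𝕜] F) (p : Submodule 𝕜 E) {y : E} (hy : y ∈ p) :
    ‖f y‖ ≤ ‖f.comp p.subtypeL‖ * ‖y‖ :=
  (f.comp p.subtypeL).le_opNorm ⟨y, hy⟩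

section TraceIdentity

variable {X Y H : Type*} [NormedAddCommGroup X] [NormedSpace ℝ X]
  [NormedAddCommGroup Y] [NormedSpace ℝ Y] [NormedAddCommGroup H] [InnerProductSpace ℝ H]
  {E : X →L[ℝ] Y} {D : X →L[ℝ] StrongDual ℝ Y} {Γ0 Γt : X →L[ℝ] H}

theorem two_mul_apply_add_norm_sq_eq_norm_sq
    (hIBP : ∀ u v : X, (D u) (E v) + (D v) (E u) + ⟪Γ0 u, Γ0 v⟫ = ⟪Γt u, Γt v⟫) (z : X) :
    2 * (D z) (E z) + ‖Γ0 z‖ ^ 2 = ‖Γt z‖ ^ 2 := by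
  have h := hIBP z z
  rw [real_inner_self_eq_norm_sq, real_inner_self_eq_norm_sq] at h
  linarith

theorem norm_sq_le_of_abs_apply_le
    (hIBP : ∀ u v : X, (D u) (E v) + (D v) (E u) + ⟪Γ0 u, Γ0 v⟫ = ⟪Γt u, Γt v⟫)
    {z : X} {c : ℝ} (hc : |(D z) (E z)| ≤ c * ‖E z‖) :
    ‖Γ0 z‖ ^ 2 ≤ ‖E z‖ ^ 2 + c ^ 2 + ‖Γt z‖ ^ 2 := by
  have hz := two_mul_apply_add_norm_sq_eq_norm_sq hIBP z
  nlinarith [neg_abs_le ((D z) (E z)), sq_nonneg (‖E z‖ - c)]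

end TraceIdentity

theorem initial_trace_bound_general
    {Y X H : Type*}
    [NormedAddCommGroup Y] [InnerProductSpace ℝ Y]
    [NormedAddCommGroup X] [InnerProductSpace ℝ X]
    [NormedAddCommGroup H] [InnerProductSpace ℝ H]
    (E : X →L[ℝ] Y) (D : X →L[ℝ] StrongDual ℝ Y) (Γt : X →L[ℝ] H)
    (hnorm : ∀ x : X, ‖x‖ ^ 2 = ‖E x‖ ^ 2 + ‖D x‖ ^ 2 + ‖Γt x‖ ^ 2)
    (Γ0 : X →L[ℝ] H)
    (hIBP : ∀ u v : X,
      (D u) (E v) + (D v) (E u) + ⟪Γ0 u, Γ0 v⟫ = ⟪Γt u, Γt v⟫)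
    (Yδ : Submodule ℝ Y) :
    (∀ z : X, E z ∈ Yδ →
      ‖Γ0 z‖ ≤ Real.sqrt
        (‖E z‖ ^ 2 + ‖(D z).comp Yδ.subtypeL‖ ^ 2 + ‖Γt z‖ ^ 2)) ∧
    (∀ z : X, ‖Γ0 z‖ ≤ ‖z‖) := by
  refine ⟨fun z hz => Real.le_sqrt_of_sq_le ?_, fun z => ?_⟩
  · exact norm_sq_le_of_abs_apply_le hIBP
      ((D z).norm_apply_le_norm_comp_subtypeL_mul_norm Yδ hz)
  · have h := norm_sq_le_of_abs_apply_le hIBP ((D z).le_opNorm (E z))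
    rw [← hnorm z] at h
    exact (sq_le_sq₀ (norm_nonneg _) (norm_nonneg _)).mp h

/-- For `z ∈ X` with `E z ∈ Y^δ` it holds that `‖Γ₀ z‖_H ≤ ‖z‖_{X,δ}`;
in particular (taking `Y^δ = Y`), `‖Γ₀ z‖_H ≤ ‖z‖_X` for all `z ∈ X`. -/
theorem initial_trace_bound
    {Y X H : Type*}
    [NormedAddCommGroup Y] [InnerProductSpace ℝ Y] [CompleteSpace Y]
    [NormedAddCommGroup X] [InnerProductSpace ℝ X] [CompleteSpace X]
    [NormedAddCommGroup H] [InnerProductSpace ℝ H] [CompleteSpace H]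
    (E : X →L[ℝ] Y) (D : X →L[ℝ] StrongDual ℝ Y) (Γt : X →L[ℝ] H)
    (hnorm : ∀ x : X, ‖x‖ ^ 2 = ‖E x‖ ^ 2 + ‖D x‖ ^ 2 + ‖Γt x‖ ^ 2)
    (Γ0 : X →L[ℝ] H)
    (hIBP : ∀ u v : X,
      (D u) (E v) + (D v) (E u) + ⟪Γ0 u, Γ0 v⟫ = ⟪Γt u, Γt v⟫)
    (Yδ : Submodule ℝ Y) (hYδ : IsClosed (Yδ : Set Y)) :
    (∀ z : X, E z ∈ Yδ →
      ‖Γ0 z‖ ≤ Real.sqrt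
        (‖E z‖ ^ 2 + ‖(D z).comp Yδ.subtypeL‖ ^ 2 + ‖Γt z‖ ^ 2)) ∧
    (∀ z : X, ‖Γ0 z‖ ≤ ‖z‖) :=
  initial_trace_bound_general E D Γt hnorm Γ0 hIBP Yδ
end

section
/- For every z ∈ X with E z ∈ Y^δ it holds that ‖z‖_{X,δ}² = ‖(D z + R_Y(E z))|_{Y^δ}‖_{(Y^δ)'}² + ‖Γ_0 z‖_H². -/
/-!
Since `E z ∈ Y^δ` and `Y^δ` is complete, `R_Y (E z)` restricted to `Y^δ` is the Riesz functional
of `E z` in `Y^δ`. Expanding the square of the dual norm through Riesz representation gives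
`‖(D z + R_Y (E z))|_{Y^δ}‖² = ‖(D z)|_{Y^δ}‖² + 2 (D z)(E z) + ‖E z‖²`, and integration by parts
with `u = v = z` turns the cross term into `‖Γ_T z‖² - ‖Γ_0 z‖²`.
-/

open NormedSpace
open scoped RealInnerProductSpace

namespace InnerProductSpace

variable {E : Type*} [NormedAddCommGroup E] [InnerProductSpace ℝ E] [CompleteSpace E]

theorem norm_add_toDual_sq (φ : StrongDual ℝ E) (y : E) :
    ‖φ + toDual ℝ E y‖ ^ 2 = ‖φ‖ ^ 2 + 2 * φ y + ‖y‖ ^ 2 := by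
  set x := (toDual ℝ E).symm φ
  have hφ : φ = toDual ℝ E x := ((toDual ℝ E).apply_symm_apply φ).symm
  have hxy : ⟪x, y⟫ = φ y := toDual_symm_apply
  rw [hφ, ← map_add, LinearIsometryEquiv.norm_map, LinearIsometryEquiv.norm_map,
    norm_add_sq_real, ← hφ, hxy]

theorem toDual_comp_subtypeL (K : Submodule ℝ E) [CompleteSpace K] {y : E} (hy : y ∈ K) :
    (toDual ℝ E y).comp K.subtypeL = toDual ℝ K ⟨y, hy⟩ :=
  rfl

end InnerProductSpace

theorem inf_sup_identity_general
    {Y X H : Type*}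
    [NormedAddCommGroup Y] [InnerProductSpace ℝ Y] [CompleteSpace Y]
    [NormedAddCommGroup X] [InnerProductSpace ℝ X]
    [NormedAddCommGroup H] [InnerProductSpace ℝ H]
    (E : X →L[ℝ] Y) (D : X →L[ℝ] StrongDual ℝ Y) (Γt : X →L[ℝ] H)
    (Γ0 : X →L[ℝ] H)
    (hIBP : ∀ u v : X,
      (D u) (E v) + (D v) (E u) + ⟪Γ0 u, Γ0 v⟫ = ⟪Γt u, Γt v⟫)
    (Yδ : Submodule ℝ Y) (hYδ : IsClosed (Yδ : Set Y)) :
    ∀ z : X, E z ∈ Yδ →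
      ‖E z‖ ^ 2 + ‖(D z).comp Yδ.subtypeL‖ ^ 2 + ‖Γt z‖ ^ 2
        = ‖(D z + InnerProductSpace.toDual ℝ Y (E z)).comp Yδ.subtypeL‖ ^ 2
          + ‖Γ0 z‖ ^ 2 := by
  intro z hz
  have : CompleteSpace Yδ := hYδ.completeSpace_coe
  have hrestrict : (D z + InnerProductSpace.toDual ℝ Y (E z)).comp Yδ.subtypeL
      = (D z).comp Yδ.subtypeL + InnerProductSpace.toDual ℝ Yδ ⟨E z, hz⟩ := by
    rw [ContinuousLinearMap.add_comp, InnerProductSpace.toDual_comp_subtypeL]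
  have hIBPz := hIBP z z
  rw [real_inner_self_eq_norm_sq, real_inner_self_eq_norm_sq] at hIBPz
  rw [hrestrict, InnerProductSpace.norm_add_toDual_sq]
  change _ = _ + 2 * D z (E z) + ‖E z‖ ^ 2 + _
  linarith

/-- The inf-sup identity: for `z ∈ X` with `E z ∈ Y^δ`,
`‖z‖_{X,δ}² = ‖(D z + R_Y (E z))|_{Y^δ}‖_{(Y^δ)'}² + ‖Γ₀ z‖_H²`. -/
theorem inf_sup_identity
    {Y X H : Type*}
    [NormedAddCommGroup Y] [InnerProductSpace ℝ Y] [CompleteSpace Y]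
    [NormedAddCommGroup X] [InnerProductSpace ℝ X] [CompleteSpace X]
    [NormedAddCommGroup H] [InnerProductSpace ℝ H] [CompleteSpace H]
    (E : X →L[ℝ] Y) (D : X →L[ℝ] StrongDual ℝ Y) (Γt : X →L[ℝ] H)
    (hnorm : ∀ x : X, ‖x‖ ^ 2 = ‖E x‖ ^ 2 + ‖D x‖ ^ 2 + ‖Γt x‖ ^ 2)
    (Γ0 : X →L[ℝ] H)
    (hIBP : ∀ u v : X,
      (D u) (E v) + (D v) (E u) + ⟪Γ0 u, Γ0 v⟫ = ⟪Γt u, Γt v⟫)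
    (Yδ : Submodule ℝ Y) (hYδ : IsClosed (Yδ : Set Y)) :
    ∀ z : X, E z ∈ Yδ →
      ‖E z‖ ^ 2 + ‖(D z).comp Yδ.subtypeL‖ ^ 2 + ‖Γt z‖ ^ 2
        = ‖(D z + InnerProductSpace.toDual ℝ Y (E z)).comp Yδ.subtypeL‖ ^ 2
          + ‖Γ0 z‖ ^ 2 :=
  inf_sup_identity_general E D Γt Γ0 hIBP Yδ hYδ
end

section
/- If u, ũ ∈ X satisfy B_e u = (ℓ, u₀) and B_e ũ = (ℓ̃, ũ₀) for data (ℓ, u₀), (ℓ̃, ũ₀) ∈ Y' × H, then ‖u − ũ‖_X ≤ (1/m_S)·((1 + 1/m_A)·‖ℓ − ℓ̃‖_{Y'} + ‖u₀ − ũ₀‖_H). In particular, B_e is injective and its inverse is Lipschitz continuous with constant L_{B_e⁻¹} := (1/m_S)(1 + 1/m_A). -/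
/-! Put `z = u - u'`, `a = A (E u) - A (E u')`, `δ = ℓ - ℓ'`, and let `R : Y' → Y` be the Riesz map.
Integration by parts turns the norm identity into `‖z‖² = ‖E z + R (D z)‖² + ‖Γ₀ z‖²`, and since
`D z = δ - a`, `‖E z + R (D z)‖ ≤ ‖δ‖ + ‖E z - R a‖`, where strong monotonicity and Lipschitz
continuity of `A` give `‖E z - R a‖² ≤ (1 - 2 m_A + L_A²) ‖E z‖²`. Testing the equation with `E z`
and dropping `‖Γ_T z‖² ≥ 0` bounds `‖E z‖` by `‖δ‖` and `‖Γ₀ z‖`. What remains is a scalar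
inequality, which holds because `1 / m_S = max 1 (max (1 / m_A) (L_A² / m_A))`. -/

open NormedSpace
open scoped RealInnerProductSpace

lemma le_add_of_sq_le_mul_add_sq {x d c : ℝ} (hd : 0 ≤ d) (hc : 0 ≤ c)
    (h : x ^ 2 ≤ d * x + c ^ 2) : x ≤ d + c := by
  nlinarith [mul_nonneg hd hc]

lemma sq_add_sq_le_sq_of_le_mul_add_mul {p g d β β' γ M : ℝ} (hp : 0 ≤ p) (hg : 0 ≤ g)
    (hd : 0 ≤ d) (hβ : 0 ≤ β) (hM : 0 ≤ M)
    (hpβγ : p ≤ β * d + γ * g) (hββ' : β ≤ β') (hγM : γ ^ 2 + 1 ≤ M ^ 2) :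
    p ^ 2 + g ^ 2 ≤ (β' * d + M * g) ^ 2 := by
  have hγM' : γ ≤ M := le_of_sq_le_sq (by linarith) hM
  have hp2 : p ^ 2 ≤ (β * d + γ * g) ^ 2 := pow_le_pow_left₀ hp hpβγ 2
  nlinarith [mul_le_mul_of_nonneg_left hγM' (mul_nonneg (mul_nonneg hβ hd) hg),
    mul_le_mul_of_nonneg_right hββ' hd, mul_nonneg hβ hd, mul_nonneg hM hg]

lemma add_sq_add_sq_le_of_energy {mA LA M d g x q : ℝ} (hmA : 0 < mA)
    (hd : 0 ≤ d) (hg : 0 ≤ g) (hx : 0 ≤ x) (hq : 0 ≤ q)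
    (hM : 1 ≤ M) (hMmA : 1 ≤ mA * M) (hMLA : LA ^ 2 ≤ mA * M)
    (hqx : q ^ 2 ≤ (1 - 2 * mA + LA ^ 2) * x ^ 2) (henergy : 2 * mA * x ^ 2 ≤ 2 * d * x + g ^ 2) :
    (d + q) ^ 2 + g ^ 2 ≤ (M * ((1 + 1 / mA) * d + g)) ^ 2 := by
  set r := √(2 * mA)
  set t := √(M ^ 2 - 1)
  have hr2 : r ^ 2 = 2 * mA := Real.sq_sqrt (by positivity)
  have ht2 : t ^ 2 = M ^ 2 - 1 := Real.sq_sqrt (by nlinarith)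
  have hr : 0 ≤ r := Real.sqrt_nonneg _
  have ht : 0 ≤ t := Real.sqrt_nonneg _
  have hqx' : q ≤ r * t * x := by
    refine le_of_sq_le_sq ?_ (by positivity)
    have hκ : 1 - 2 * mA + LA ^ 2 ≤ 2 * mA * (M ^ 2 - 1) := by nlinarith
    calc q ^ 2 ≤ (1 - 2 * mA + LA ^ 2) * x ^ 2 := hqx
      _ ≤ 2 * mA * (M ^ 2 - 1) * x ^ 2 := by gcongr
      _ = (r * t * x) ^ 2 := by rw [mul_pow, mul_pow, hr2, ht2]
  have hmAx : mA * x ≤ d + r * g / 2 :=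
    le_add_of_sq_le_mul_add_sq hd (by positivity) (by nlinarith)
  have hqdg : q ≤ r * t / mA * d + t * g := by
    have : mA * q ≤ mA * (r * t / mA * d + t * g) :=
      calc mA * q ≤ r * t * (mA * x) := by nlinarith
        _ ≤ r * t * (d + r * g / 2) := by gcongr
        _ = r * t * d + r ^ 2 / 2 * t * g := by ring
        _ = mA * (r * t / mA * d + t * g) := by rw [hr2]; field_simp
    exact le_of_mul_le_mul_left this hmA
  have hβ : 1 + r * t / mA ≤ M * (1 + 1 / mA) := by
    have hrt : r * t ≤ M * (mA + 1) - mA :=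
      le_of_sq_le_sq (by rw [mul_pow, hr2, ht2]; nlinarith [sq_nonneg (mA * (M - 1) - 1)])
        (by nlinarith)
    calc 1 + r * t / mA = (mA + r * t) / mA := by field_simp
      _ ≤ M * (mA + 1) / mA := by gcongr; linarith
      _ = M * (1 + 1 / mA) := by field_simp
  calc (d + q) ^ 2 + g ^ 2 ≤ (M * (1 + 1 / mA) * d + M * g) ^ 2 :=
        sq_add_sq_le_sq_of_le_mul_add_mul (γ := t) (by positivity) hg hd (by positivity) (by linarith)
          (by linarith) hβ (by linarith)
    _ = (M * ((1 + 1 / mA) * d + g)) ^ 2 := by ring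

section Riesz

variable {Y : Type*} [NormedAddCommGroup Y] [InnerProductSpace ℝ Y] [CompleteSpace Y]

open InnerProductSpace

lemma norm_add_toDual_symm_sq (e : Y) (f : StrongDual ℝ Y) :
    ‖e + (toDual ℝ Y).symm f‖ ^ 2 = ‖e‖ ^ 2 + 2 * f e + ‖f‖ ^ 2 := by
  rw [norm_add_sq_real, real_inner_comm, toDual_symm_apply, LinearIsometryEquiv.norm_map]

lemma norm_sub_toDual_symm_sq (e : Y) (f : StrongDual ℝ Y) :
    ‖e - (toDual ℝ Y).symm f‖ ^ 2 = ‖e‖ ^ 2 - 2 * f e + ‖f‖ ^ 2 := by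
  rw [norm_sub_sq_real, real_inner_comm, toDual_symm_apply, LinearIsometryEquiv.norm_map]

lemma norm_sub_toDual_symm_sq_le {m L : ℝ} {e : Y} {f : StrongDual ℝ Y}
    (hmono : m * ‖e‖ ^ 2 ≤ f e) (hlip : ‖f‖ ≤ L * ‖e‖) :
    ‖e - (toDual ℝ Y).symm f‖ ^ 2 ≤ (1 - 2 * m + L ^ 2) * ‖e‖ ^ 2 := by
  have hf2 : ‖f‖ ^ 2 ≤ (L * ‖e‖) ^ 2 := pow_le_pow_left₀ (norm_nonneg f) hlip 2
  rw [norm_sub_toDual_symm_sq]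
  nlinarith

end Riesz

section IntegrationByParts

variable {Y X H : Type*}
  [NormedAddCommGroup Y] [InnerProductSpace ℝ Y]
  [NormedAddCommGroup X] [InnerProductSpace ℝ X]
  [NormedAddCommGroup H] [InnerProductSpace ℝ H]
  {E : X →L[ℝ] Y} {D : X →L[ℝ] StrongDual ℝ Y} {Γt Γ0 : X →L[ℝ] H}

open InnerProductSpace

lemma norm_sq_final_trace_eq
    (hIBP : ∀ u v : X, (D u) (E v) + (D v) (E u) + ⟪Γ0 u, Γ0 v⟫ = ⟪Γt u, Γt v⟫) (z : X) :
    ‖Γt z‖ ^ 2 = 2 * D z (E z) + ‖Γ0 z‖ ^ 2 := by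
  have h := hIBP z z
  rw [real_inner_self_eq_norm_sq, real_inner_self_eq_norm_sq] at h
  linarith

lemma norm_sq_eq_norm_add_toDual_symm_sq [CompleteSpace Y]
    (hnorm : ∀ x : X, ‖x‖ ^ 2 = ‖E x‖ ^ 2 + ‖D x‖ ^ 2 + ‖Γt x‖ ^ 2)
    (hIBP : ∀ u v : X, (D u) (E v) + (D v) (E u) + ⟪Γ0 u, Γ0 v⟫ = ⟪Γt u, Γt v⟫) (z : X) :
    ‖z‖ ^ 2 = ‖E z + (toDual ℝ Y).symm (D z)‖ ^ 2 + ‖Γ0 z‖ ^ 2 := by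
  rw [hnorm, norm_add_toDual_symm_sq, norm_sq_final_trace_eq hIBP]
  ring

lemma norm_le_of_monotone_perturbation [CompleteSpace Y]
    (hnorm : ∀ x : X, ‖x‖ ^ 2 = ‖E x‖ ^ 2 + ‖D x‖ ^ 2 + ‖Γt x‖ ^ 2)
    (hIBP : ∀ u v : X, (D u) (E v) + (D v) (E u) + ⟪Γ0 u, Γ0 v⟫ = ⟪Γt u, Γt v⟫)
    {mA LA M : ℝ} (hmA : 0 < mA) (hM : 1 ≤ M) (hMmA : 1 ≤ mA * M) (hMLA : LA ^ 2 ≤ mA * M)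
    (z : X) (a : StrongDual ℝ Y) (hmono : mA * ‖E z‖ ^ 2 ≤ a (E z)) (hlip : ‖a‖ ≤ LA * ‖E z‖) :
    ‖z‖ ≤ M * ((1 + 1 / mA) * ‖D z + a‖ + ‖Γ0 z‖) := by
  set δ := D z + a
  have hDz : D z = δ - a := by simp [δ]
  have htriangle : ‖E z + (toDual ℝ Y).symm (D z)‖ ≤ ‖δ‖ + ‖E z - (toDual ℝ Y).symm a‖ := by
    calc ‖E z + (toDual ℝ Y).symm (D z)‖
        = ‖(toDual ℝ Y).symm δ + (E z - (toDual ℝ Y).symm a)‖ := by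
          rw [hDz, map_sub]; abel_nf
      _ ≤ ‖δ‖ + ‖E z - (toDual ℝ Y).symm a‖ := by
          grw [norm_add_le, LinearIsometryEquiv.norm_map]
  -- test the equation with `E z` and drop `‖Γt z‖ ^ 2 ≥ 0`
  have henergy : 2 * mA * ‖E z‖ ^ 2 ≤ 2 * ‖δ‖ * ‖E z‖ + ‖Γ0 z‖ ^ 2 := by
    have hΓt := norm_sq_final_trace_eq hIBP z
    have hδ : δ (E z) ≤ ‖δ‖ * ‖E z‖ := (le_abs_self _).trans (δ.le_opNorm (E z))
    rw [hDz, sub_apply] at hΓt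
    nlinarith [sq_nonneg ‖Γt z‖]
  refine le_of_sq_le_sq ?_ (by positivity)
  calc ‖z‖ ^ 2 ≤ (‖δ‖ + ‖E z - (toDual ℝ Y).symm a‖) ^ 2 + ‖Γ0 z‖ ^ 2 := by
        rw [norm_sq_eq_norm_add_toDual_symm_sq hnorm hIBP]
        gcongr
    _ ≤ _ := add_sq_add_sq_le_of_energy hmA (norm_nonneg _) (norm_nonneg _) (norm_nonneg _)
        (norm_nonneg _) hM hMmA hMLA (norm_sub_toDual_symm_sq_le hmono hlip) henergy

end IntegrationByParts

lemma le_mul_one_div_min {m L : ℝ} (hm : 0 < m) (hL : 0 < L) :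
    1 ≤ 1 / min 1 (min m (m / L ^ 2)) ∧ 1 ≤ m * (1 / min 1 (min m (m / L ^ 2))) ∧
      L ^ 2 ≤ m * (1 / min 1 (min m (m / L ^ 2))) := by
  set μ := min 1 (min m (m / L ^ 2))
  have hμ : 0 < μ := lt_min one_pos (lt_min hm (by positivity))
  have hμm : μ ≤ m := (min_le_right _ _).trans (min_le_left _ _)
  have hμL : μ * L ^ 2 ≤ m :=
    (le_div_iff₀ (by positivity)).1 ((min_le_right _ _).trans (min_le_right _ _))
  have hμ1 : μ ≤ 1 := min_le_left _ _
  simp only [mul_one_div, le_div_iff₀ hμ]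
  exact ⟨by linarith, by linarith, by linarith⟩

theorem Be_inverse_lipschitz_general
    {Y X H : Type*}
    [NormedAddCommGroup Y] [InnerProductSpace ℝ Y] [CompleteSpace Y]
    [NormedAddCommGroup X] [InnerProductSpace ℝ X]
    [NormedAddCommGroup H] [InnerProductSpace ℝ H]
    (E : X →L[ℝ] Y) (D : X →L[ℝ] StrongDual ℝ Y) (Γt : X →L[ℝ] H)
    (hnorm : ∀ x : X, ‖x‖ ^ 2 = ‖E x‖ ^ 2 + ‖D x‖ ^ 2 + ‖Γt x‖ ^ 2)
    (A : Y → StrongDual ℝ Y) (LA mA : ℝ) (hLA : 0 < LA) (hmA : 0 < mA)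
    (hAlip : ∀ w v : Y, ‖A w - A v‖ ≤ LA * ‖w - v‖)
    (hAmono : ∀ w v : Y, (A w - A v) (w - v) ≥ mA * ‖w - v‖ ^ 2)
    (Γ0 : X →L[ℝ] H)
    (hIBP : ∀ u v : X,
      (D u) (E v) + (D v) (E u) + ⟪Γ0 u, Γ0 v⟫ = ⟪Γt u, Γt v⟫)
    (mS : ℝ) (hmS : mS = min 1 (min mA (mA / LA ^ 2)))
    (u u' : X) (ℓ ℓ' : StrongDual ℝ Y) (u₀ u₀' : H)
    (hu : D u + A (E u) = ℓ ∧ Γ0 u = u₀)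
    (hu2 : D u' + A (E u') = ℓ' ∧ Γ0 u' = u₀') :
    ‖u - u'‖ ≤ (1 / mS) * ((1 + 1 / mA) * ‖ℓ - ℓ'‖ + ‖u₀ - u₀'‖) := by
  obtain ⟨hℓ, hu₀⟩ := hu
  obtain ⟨hℓ', hu₀'⟩ := hu2
  subst hmS hℓ hℓ' hu₀ hu₀'
  obtain ⟨hM, hMmA, hMLA⟩ := le_mul_one_div_min hmA hLA
  have hEz : E (u - u') = E u - E u' := map_sub E u u'
  have hstab := norm_le_of_monotone_perturbation hnorm hIBP hmA hM hMmA hMLA (u - u')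
    (A (E u) - A (E u')) (hEz ▸ hAmono (E u) (E u')) (hEz ▸ hAlip (E u) (E u'))
  have hδ : D (u - u') + (A (E u) - A (E u')) = D u + A (E u) - (D u' + A (E u')) := by
    rw [map_sub]; abel
  rwa [hδ, map_sub] at hstab

/-- Lipschitz continuous dependence of the solution of the IVP on the data:
if `B_e u = (ℓ, u₀)` and `B_e u' = (ℓ', u₀')`, then
`‖u − u'‖_X ≤ (1/m_S)·((1 + 1/m_A)·‖ℓ − ℓ'‖_{Y'} + ‖u₀ − u₀'‖_H)`. -/
theorem Be_inverse_lipschitz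
    {Y X H : Type*}
    [NormedAddCommGroup Y] [InnerProductSpace ℝ Y] [CompleteSpace Y]
    [NormedAddCommGroup X] [InnerProductSpace ℝ X] [CompleteSpace X]
    [NormedAddCommGroup H] [InnerProductSpace ℝ H] [CompleteSpace H]
    (E : X →L[ℝ] Y) (D : X →L[ℝ] StrongDual ℝ Y) (Γt : X →L[ℝ] H)
    (hnorm : ∀ x : X, ‖x‖ ^ 2 = ‖E x‖ ^ 2 + ‖D x‖ ^ 2 + ‖Γt x‖ ^ 2)
    (A : Y → StrongDual ℝ Y) (LA mA : ℝ) (hLA : 0 < LA) (hmA : 0 < mA)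
    (hAlip : ∀ w v : Y, ‖A w - A v‖ ≤ LA * ‖w - v‖)
    (hAmono : ∀ w v : Y, (A w - A v) (w - v) ≥ mA * ‖w - v‖ ^ 2)
    (Γ0 : X →L[ℝ] H)
    (hIBP : ∀ u v : X,
      (D u) (E v) + (D v) (E u) + ⟪Γ0 u, Γ0 v⟫ = ⟪Γt u, Γt v⟫)
    (mS : ℝ) (hmS : mS = min 1 (min mA (mA / LA ^ 2)))
    (u u' : X) (ℓ ℓ' : StrongDual ℝ Y) (u₀ u₀' : H)
    (hu : D u + A (E u) = ℓ ∧ Γ0 u = u₀)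
    (hu2 : D u' + A (E u') = ℓ' ∧ Γ0 u' = u₀') :
    ‖u - u'‖ ≤ (1 / mS) * ((1 + 1 / mA) * ‖ℓ - ℓ'‖ + ‖u₀ - u₀'‖) :=
  Be_inverse_lipschitz_general E D Γt hnorm A LA mA hLA hmA hAlip hAmono Γ0 hIBP mS hmS u u' ℓ ℓ' u₀
    u₀' hu hu2
end

section
/- It holds that ‖λ^δ − E u^δ‖_Y + (√(1 + L_A²)/m_A)·‖u₀ − Γ_0 u^δ‖_H ≤ 2·C₁·(√(1 + L_A²)/m_A)·inf_{ū ∈ X^δ} ‖u − ū‖_X, where C₁ := 1 + (1/m_S)·(1 + √((1 + L_A²)(1 + 1/m_A²))). -/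
open NormedSpace
open scoped RealInnerProductSpace

/-!
Fix `ū ∈ X^δ` and let `λ̄ ∈ Y^δ` solve the first Galerkin equation with `u^δ` replaced by `ū`; it
exists by Zarantonello's contraction argument, since `A` restricted to the closed subspace `Y^δ`
is still Lipschitz and strongly monotone. Testing the second Galerkin equation with
`φ = u^δ - ū`, integrating by parts and using the strong monotonicity of `A` twice (once for
`E φ`, once for `λ^δ - λ̄`, which controls `‖(D φ)|_{Y^δ}‖`) yields the discrete stability estimate
`m_S ‖φ‖_{X,δ} ≤ (1 + √((1 + L_A²)(1 + 1/m_A²))) ‖u - ū‖_X`. Strong monotonicity once more bounds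
`m_A ‖λ^δ - E u^δ‖` by `√(1 + L_A²) (‖u - ū‖_X + ‖φ‖_{X,δ})`, and integration by parts bounds
`‖Γ_0 x‖` by `‖x‖_X`, and by `‖x‖_{X,δ}` when `E x ∈ Y^δ`. Taking the infimum over `ū` concludes.
-/

theorem mul_add_le_sqrt_one_add_sq_mul_sqrt (p a b c : ℝ) :
    p * a + b ≤ √(1 + p ^ 2) * √(a ^ 2 + b ^ 2 + c ^ 2) := by
  rw [← Real.sqrt_mul (by positivity)]
  refine (le_abs_self _).trans (Real.abs_le_sqrt ?_)
  nlinarith [sq_nonneg (p * b - a), sq_nonneg c, sq_nonneg p]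

theorem mul_le_of_mul_sq_le_mul {m n C : ℝ} (hn : 0 ≤ n) (hC : 0 ≤ C) (h : m * n ^ 2 ≤ C * n) :
    m * n ≤ C := by
  rcases hn.eq_or_lt with rfl | hn
  · simpa using hC
  · exact le_of_mul_le_mul_right (by linarith) hn

section Restriction

variable {Y : Type*} [NormedAddCommGroup Y] [NormedSpace ℝ Y] (S : Submodule ℝ Y)

theorem StrongDual.norm_comp_subtypeL_le (f : StrongDual ℝ Y) : ‖f.comp S.subtypeL‖ ≤ ‖f‖ :=
  (f.opNorm_comp_le _).trans (mul_le_of_le_one_right (norm_nonneg f) S.norm_subtypeL_le)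

theorem StrongDual.abs_apply_le_norm_comp_subtypeL (f : StrongDual ℝ Y) {y : Y} (hy : y ∈ S) :
    |f y| ≤ ‖f.comp S.subtypeL‖ * ‖y‖ :=
  (f.comp S.subtypeL).le_opNorm ⟨y, hy⟩

variable {A : Y → StrongDual ℝ Y} {L m : ℝ}

theorem mul_norm_sub_le_of_forall_apply_eq
    (hmono : ∀ w v, m * ‖w - v‖ ^ 2 ≤ (A w - A v) (w - v)) {y y' : Y} (hy : y ∈ S) (hy' : y' ∈ S)
    {f : StrongDual ℝ Y} (h : ∀ v ∈ S, (A y - A y') v = f v) :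
    m * ‖y - y'‖ ≤ ‖f.comp S.subtypeL‖ := by
  have hmem := S.sub_mem hy hy'
  refine mul_le_of_mul_sq_le_mul (norm_nonneg _) (norm_nonneg (f.comp S.subtypeL)) ?_
  calc m * ‖y - y'‖ ^ 2 ≤ f (y - y') := (hmono y y').trans_eq (h _ hmem)
    _ ≤ ‖f.comp S.subtypeL‖ * ‖y - y'‖ :=
      le_of_abs_le (StrongDual.abs_apply_le_norm_comp_subtypeL S f hmem)

theorem div_sq_mul_sq_norm_comp_le (hL : 0 < L) (hm : 0 ≤ m)
    (hlip : ∀ w v, ‖A w - A v‖ ≤ L * ‖w - v‖)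
    (hmono : ∀ w v, m * ‖w - v‖ ^ 2 ≤ (A w - A v) (w - v)) {y y' : Y} (hy : y ∈ S) (hy' : y' ∈ S)
    {g : StrongDual ℝ Y} (h : ∀ v ∈ S, (A y - A y') v = -g v) :
    m / L ^ 2 * ‖g.comp S.subtypeL‖ ^ 2 ≤ -g (y - y') := by
  have hg : g.comp S.subtypeL = (A y' - A y).comp S.subtypeL := by
    ext v
    have := h v v.2
    simp only [ContinuousLinearMap.comp_apply, sub_apply, Submodule.subtypeL_apply] at this ⊢
    linarith
  have hnorm : ‖g.comp S.subtypeL‖ ≤ L * ‖y - y'‖ := by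
    rw [hg, norm_sub_rev y]
    exact (StrongDual.norm_comp_subtypeL_le S _).trans (hlip y' y)
  calc m / L ^ 2 * ‖g.comp S.subtypeL‖ ^ 2 ≤ m / L ^ 2 * (L * ‖y - y'‖) ^ 2 := by gcongr
    _ = m * ‖y - y'‖ ^ 2 := by field_simp
    _ ≤ -g (y - y') := (hmono y y').trans_eq (h _ (S.sub_mem hy hy'))

end Restriction

section StronglyMonotone

variable {W : Type*} [NormedAddCommGroup W] [InnerProductSpace ℝ W] [CompleteSpace W]

/-- Zarantonello: for `ρ = m / L²` the map `x ↦ x - ρ (B x - b)` is a contraction with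
constant `√(1 - m² / L²)`, and its fixed point solves `B x = b`. -/
theorem exists_eq_of_lipschitz_of_strongly_monotone (B : W → W) {L m : ℝ} (hL : 0 < L)
    (hm : 0 < m) (hlip : ∀ x y, ‖B x - B y‖ ≤ L * ‖x - y‖)
    (hmono : ∀ x y, m * ‖x - y‖ ^ 2 ≤ ⟪B x - B y, x - y⟫) (b : W) : ∃ x, B x = b := by
  set ρ := m / L ^ 2
  set k := √(1 - m ^ 2 / L ^ 2)
  have hρ : 0 < ρ := by positivity
  have hk : k < 1 := (Real.sqrt_lt' one_pos).2 (by rw [one_pow, sub_lt_self_iff]; positivity)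
  have hcontr : ∀ x y, ‖(x - ρ • (B x - b)) - (y - ρ • (B y - b))‖ ≤ k * ‖x - y‖ := by
    intro x y
    have hsq : ‖(x - y) - ρ • (B x - B y)‖ ^ 2 ≤ (1 - m ^ 2 / L ^ 2) * ‖x - y‖ ^ 2 := by
      have hB : ‖B x - B y‖ ^ 2 ≤ L ^ 2 * ‖x - y‖ ^ 2 := by
        rw [← mul_pow]; exact pow_le_pow_left₀ (norm_nonneg _) (hlip x y) 2
      have hc : 1 - m ^ 2 / L ^ 2 = 1 - 2 * ρ * m + ρ ^ 2 * L ^ 2 := by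
        simp only [ρ]; field_simp; ring
      rw [norm_sub_sq_real, inner_smul_right, norm_smul, mul_pow, Real.norm_of_nonneg hρ.le,
        real_inner_comm, hc]
      nlinarith [hmono x y, mul_le_mul_of_nonneg_left hB (sq_nonneg ρ)]
    calc ‖(x - ρ • (B x - b)) - (y - ρ • (B y - b))‖
        = √(‖(x - y) - ρ • (B x - B y)‖ ^ 2) := by
          rw [Real.sqrt_sq (norm_nonneg _)]; congr 1; module
      _ ≤ √((1 - m ^ 2 / L ^ 2) * ‖x - y‖ ^ 2) := Real.sqrt_le_sqrt hsq
      _ = k * ‖x - y‖ := by rw [Real.sqrt_mul' _ (sq_nonneg _), Real.sqrt_sq (norm_nonneg _)]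
  have hT : ContractingWith ⟨k, Real.sqrt_nonneg _⟩ fun x => x - ρ • (B x - b) :=
    ⟨hk, LipschitzWith.of_dist_le_mul fun x y => by
      rw [dist_eq_norm, dist_eq_norm]; exact hcontr x y⟩
  refine ⟨ContractingWith.fixedPoint _ hT, ?_⟩
  have hfix := ContractingWith.fixedPoint_isFixedPt hT
  rw [Function.IsFixedPt, sub_eq_self, smul_eq_zero, sub_eq_zero] at hfix
  exact hfix.resolve_left hρ.ne'

theorem exists_apply_eq_of_lipschitz_of_strongly_monotone (A : W → StrongDual ℝ W) {L m : ℝ}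
    (hL : 0 < L) (hm : 0 < m) (hlip : ∀ x y, ‖A x - A y‖ ≤ L * ‖x - y‖)
    (hmono : ∀ x y, m * ‖x - y‖ ^ 2 ≤ (A x - A y) (x - y)) (f : StrongDual ℝ W) :
    ∃ x, A x = f := by
  obtain ⟨x, hx⟩ := exists_eq_of_lipschitz_of_strongly_monotone
    (fun x => (InnerProductSpace.toDual ℝ W).symm (A x)) hL hm
    (fun x y => by simpa only [← map_sub, LinearIsometryEquiv.norm_map] using hlip x y)
    (fun x y => by simpa only [← map_sub, InnerProductSpace.toDual_symm_apply] using hmono x y)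
    ((InnerProductSpace.toDual ℝ W).symm f)
  exact ⟨x, (InnerProductSpace.toDual ℝ W).symm.injective hx⟩

theorem Submodule.exists_mem_forall_apply_eq {Y : Type*} [NormedAddCommGroup Y]
    [InnerProductSpace ℝ Y] (S : Submodule ℝ Y) [CompleteSpace S] (A : Y → StrongDual ℝ Y)
    {L m : ℝ} (hL : 0 < L) (hm : 0 < m) (hlip : ∀ x y, ‖A x - A y‖ ≤ L * ‖x - y‖)
    (hmono : ∀ x y, m * ‖x - y‖ ^ 2 ≤ (A x - A y) (x - y)) (f : StrongDual ℝ Y) :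
    ∃ y ∈ S, ∀ v ∈ S, A y v = f v := by
  obtain ⟨y, hy⟩ := exists_apply_eq_of_lipschitz_of_strongly_monotone
    (fun y : S => (A y).comp S.subtypeL) hL hm
    (fun x y => by
      rw [← ContinuousLinearMap.sub_comp]
      exact (StrongDual.norm_comp_subtypeL_le S _).trans (hlip x y))
    (fun x y => hmono x y) (f.comp S.subtypeL)
  exact ⟨y, y.2, fun v hv => congr($hy ⟨v, hv⟩)⟩

end StronglyMonotone

section SpaceTime

variable {Y X H : Type*} [NormedAddCommGroup Y] [NormedSpace ℝ Y] [NormedAddCommGroup X]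
  [NormedSpace ℝ X] [NormedAddCommGroup H] [InnerProductSpace ℝ H]
  (E : X →L[ℝ] Y) (D : X →L[ℝ] StrongDual ℝ Y) (Γt Γ0 : X →L[ℝ] H) (S : Submodule ℝ Y)

/-- The mesh-dependent norm `‖x‖_{X,δ}`, with `S` in the role of `Y^δ`. -/
noncomputable def meshNorm (x : X) : ℝ :=
  √(‖E x‖ ^ 2 + ‖(D x).comp S.subtypeL‖ ^ 2 + ‖Γt x‖ ^ 2)

theorem meshNorm_le_norm (hnorm : ∀ x : X, ‖x‖ ^ 2 = ‖E x‖ ^ 2 + ‖D x‖ ^ 2 + ‖Γt x‖ ^ 2) (x : X) :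
    meshNorm E D Γt S x ≤ ‖x‖ := by
  rw [meshNorm, ← Real.sqrt_sq (norm_nonneg x), hnorm]
  gcongr
  exact StrongDual.norm_comp_subtypeL_le S (D x)

theorem mul_add_le_sqrt_mul_meshNorm (p : ℝ) (x : X) :
    p * ‖E x‖ + ‖(D x).comp S.subtypeL‖ ≤ √(1 + p ^ 2) * meshNorm E D Γt S x :=
  mul_add_le_sqrt_one_add_sq_mul_sqrt _ _ _ _

theorem mul_add_le_sqrt_mul_norm (hnorm : ∀ x : X, ‖x‖ ^ 2 = ‖E x‖ ^ 2 + ‖D x‖ ^ 2 + ‖Γt x‖ ^ 2)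
    (p : ℝ) (x : X) : p * ‖E x‖ + ‖(D x).comp S.subtypeL‖ ≤ √(1 + p ^ 2) * ‖x‖ :=
  (mul_add_le_sqrt_mul_meshNorm E D Γt S p x).trans
    (by gcongr; exact meshNorm_le_norm E D Γt S hnorm x)

theorem add_div_le_sqrt_mul_meshNorm (m : ℝ) (x : X) :
    ‖E x‖ + ‖(D x).comp S.subtypeL‖ / m ≤ √(1 + 1 / m ^ 2) * meshNorm E D Γt S x := by
  calc ‖E x‖ + ‖(D x).comp S.subtypeL‖ / m = 1 / m * ‖(D x).comp S.subtypeL‖ + ‖E x‖ := by ring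
    _ ≤ √(1 + (1 / m) ^ 2) * √(‖(D x).comp S.subtypeL‖ ^ 2 + ‖E x‖ ^ 2 + ‖Γt x‖ ^ 2) :=
      mul_add_le_sqrt_one_add_sq_mul_sqrt _ _ _ _
    _ = √(1 + 1 / m ^ 2) * meshNorm E D Γt S x := by rw [meshNorm]; ring_nf

variable {E D Γt Γ0 S}

/-- Integration by parts gives `‖Γ0 x‖² = ‖Γt x‖² - 2 (D x) (E x)`. -/
theorem sq_norm_le_of_integration_by_parts
    (hIBP : ∀ u v : X, (D u) (E v) + (D v) (E u) + ⟪Γ0 u, Γ0 v⟫ = ⟪Γt u, Γt v⟫) (x : X) {c : ℝ}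
    (hc : |D x (E x)| ≤ c * ‖E x‖) : ‖Γ0 x‖ ^ 2 ≤ ‖E x‖ ^ 2 + c ^ 2 + ‖Γt x‖ ^ 2 := by
  have h := hIBP x x
  rw [real_inner_self_eq_norm_sq, real_inner_self_eq_norm_sq] at h
  nlinarith [neg_le_of_abs_le hc, sq_nonneg (c - ‖E x‖)]

theorem norm_le_of_integration_by_parts
    (hnorm : ∀ x : X, ‖x‖ ^ 2 = ‖E x‖ ^ 2 + ‖D x‖ ^ 2 + ‖Γt x‖ ^ 2)
    (hIBP : ∀ u v : X, (D u) (E v) + (D v) (E u) + ⟪Γ0 u, Γ0 v⟫ = ⟪Γt u, Γt v⟫) (x : X) :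
    ‖Γ0 x‖ ≤ ‖x‖ := by
  refine pow_le_pow_iff_left₀ (norm_nonneg _) (norm_nonneg _) two_ne_zero |>.mp ?_
  rw [hnorm]
  refine sq_norm_le_of_integration_by_parts hIBP x ?_
  rw [← Real.norm_eq_abs]
  exact (D x).le_opNorm (E x)

theorem norm_le_meshNorm_of_integration_by_parts
    (hIBP : ∀ u v : X, (D u) (E v) + (D v) (E u) + ⟪Γ0 u, Γ0 v⟫ = ⟪Γt u, Γt v⟫) {x : X}
    (hx : E x ∈ S) : ‖Γ0 x‖ ≤ meshNorm E D Γt S x :=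
  Real.le_sqrt_of_sq_le <| sq_norm_le_of_integration_by_parts hIBP x <|
    StrongDual.abs_apply_le_norm_comp_subtypeL S (D x) hx

end SpaceTime

section Galerkin

variable {Y X H : Type*} [NormedAddCommGroup Y] [NormedSpace ℝ Y] [NormedAddCommGroup X]
  [NormedSpace ℝ X] [NormedAddCommGroup H] [InnerProductSpace ℝ H]
  {E : X →L[ℝ] Y} {D : X →L[ℝ] StrongDual ℝ Y} {Γt Γ0 : X →L[ℝ] H} {A : Y → StrongDual ℝ Y}
  {S : Submodule ℝ Y} {ℓ : StrongDual ℝ Y} {u uδ ub : X} {lamδ lb : Y} {LA mA : ℝ}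

theorem galerkin_orthogonality_fst (hℓ : D u + A (E u) = ℓ)
    (hGal₁ : ∀ v ∈ S, (A lamδ) v + (D uδ) v = ℓ v) :
    ∀ v ∈ S, (A lamδ - A (E u)) v = D (u - uδ) v := by
  intro v hv
  have h := hGal₁ v hv
  rw [← hℓ] at h
  simp only [sub_apply, add_apply, map_sub] at h ⊢
  linarith

theorem galerkin_orthogonality_snd {Xδ : Submodule ℝ X} {u₀ : H}
    (hIBP : ∀ u v : X, (D u) (E v) + (D v) (E u) + ⟪Γ0 u, Γ0 v⟫ = ⟪Γt u, Γt v⟫)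
    (hℓ : D u + A (E u) = ℓ) (hu₀ : Γ0 u = u₀)
    (hGal₂ : ∀ w ∈ Xδ, (D w) lamδ - (A (E uδ)) (E w) - ⟪Γt uδ, Γt w⟫
        = -(ℓ (E w)) - ⟪u₀, Γ0 w⟫) :
    ∀ w ∈ Xδ, D w (lamδ - E u) = (A (E uδ) - A (E u)) (E w) + ⟪Γt (uδ - u), Γt w⟫ := by
  intro w hw
  have h := hGal₂ w hw
  have hw := hIBP u w
  rw [← hℓ, ← hu₀] at h
  simp only [sub_apply, add_apply, map_sub, inner_sub_left] at h ⊢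
  linarith

theorem galerkin_error_energy_le
    (hIBP : ∀ u v : X, (D u) (E v) + (D v) (E u) + ⟪Γ0 u, Γ0 v⟫ = ⟪Γt u, Γt v⟫)
    (hLA : 0 < LA) (hmA : 0 ≤ mA) (hAlip : ∀ w v : Y, ‖A w - A v‖ ≤ LA * ‖w - v‖)
    (hAmono : ∀ w v : Y, mA * ‖w - v‖ ^ 2 ≤ (A w - A v) (w - v))
    (hlamδ : lamδ ∈ S) (hlb : lb ∈ S) (hEuδ : E uδ ∈ S) (hEub : E ub ∈ S)
    (horth₁ : ∀ v ∈ S, (A lamδ - A (E u)) v = D (u - uδ) v)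
    (hlb_eq : ∀ v ∈ S, (A lb - A (E u)) v = D (u - ub) v)
    (horth₂ : D (uδ - ub) (lamδ - E u)
      = (A (E uδ) - A (E u)) (E (uδ - ub)) + ⟪Γt (uδ - u), Γt (uδ - ub)⟫) :
    mA * ‖E (uδ - ub)‖ ^ 2 + mA / LA ^ 2 * ‖(D (uδ - ub)).comp S.subtypeL‖ ^ 2
        + ‖Γt (uδ - ub)‖ ^ 2
      ≤ (LA * ‖E (u - ub)‖ + ‖(D (u - ub)).comp S.subtypeL‖) * ‖E (uδ - ub)‖
        + ‖(D (uδ - ub)).comp S.subtypeL‖ * ‖lb - E ub‖ + ‖Γ0 (u - ub)‖ * ‖Γ0 (uδ - ub)‖ := by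
  set φ := uδ - ub with hφ
  set z := u - ub with hz
  have hEφ : E φ ∈ S := by rw [hφ, map_sub]; exact S.sub_mem hEuδ hEub
  have hσ : ∀ v ∈ S, (A lamδ - A lb) v = -D φ v := by
    intro v hv
    have h₁ := horth₁ v hv
    have h₂ := hlb_eq v hv
    simp only [sub_apply, map_sub, hφ, hz] at h₁ h₂ ⊢
    linarith
  have hDσ := div_sq_mul_sq_norm_comp_le S hLA hmA hAlip hAmono hlamδ hlb hσ
  have hAφ : mA * ‖E φ‖ ^ 2 ≤ (A (E uδ) - A (E ub)) (E φ) := by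
    simpa only [hφ, map_sub] using hAmono (E uδ) (E ub)
  have hAz : (A (E u) - A (E ub)) (E φ) ≤ LA * ‖E z‖ * ‖E φ‖ := by
    refine (le_abs_self _).trans ?_
    rw [← Real.norm_eq_abs, hz, map_sub E u ub]
    exact ((A (E u) - A (E ub)).le_opNorm _).trans (by gcongr; exact hAlip _ _)
  have hDψ : D φ (lb - E ub) ≤ ‖(D φ).comp S.subtypeL‖ * ‖lb - E ub‖ :=
    le_of_abs_le (StrongDual.abs_apply_le_norm_comp_subtypeL S _ (S.sub_mem hlb hEub))
  have hDz : D z (E φ) ≤ ‖(D z).comp S.subtypeL‖ * ‖E φ‖ :=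
    le_of_abs_le (StrongDual.abs_apply_le_norm_comp_subtypeL S _ hEφ)
  have hΓ0 : ⟪Γ0 φ, Γ0 z⟫ ≤ ‖Γ0 z‖ * ‖Γ0 φ‖ := (real_inner_le_norm _ _).trans_eq (mul_comm _ _)
  have hsplitD : D φ (lamδ - E u) = D φ (lamδ - lb) + D φ (lb - E ub) - D φ (E z) := by
    rw [hz, map_sub E]; simp only [map_sub]; ring
  have hsplitA : (A (E uδ) - A (E u)) (E φ)
      = (A (E uδ) - A (E ub)) (E φ) - (A (E u) - A (E ub)) (E φ) := by
    simp only [sub_apply]; ring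
  have hsplitΓ : ⟪Γt (uδ - u), Γt φ⟫ = ‖Γt φ‖ ^ 2 - ⟪Γt φ, Γt z⟫ := by
    rw [show uδ - u = φ - z by rw [hφ, hz]; abel, map_sub, inner_sub_left,
      real_inner_self_eq_norm_sq, real_inner_comm]
  have hIBPφz := hIBP φ z
  have hid : (A (E uδ) - A (E ub)) (E φ) + ‖Γt φ‖ ^ 2 - D φ (lamδ - lb)
      = D φ (lb - E ub) + D z (E φ) + ⟪Γ0 φ, Γ0 z⟫ + (A (E u) - A (E ub)) (E φ) := by
    linarith
  linarith

theorem mul_norm_sub_le_of_forall_apply_sub_eq {w : X} {y : Y}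
    (hAlip : ∀ w v : Y, ‖A w - A v‖ ≤ LA * ‖w - v‖)
    (hAmono : ∀ w v : Y, mA * ‖w - v‖ ^ 2 ≤ (A w - A v) (w - v)) (hy : y ∈ S) (hEw : E w ∈ S)
    (h : ∀ v ∈ S, (A y - A (E u)) v = D (u - w) v) :
    mA * ‖y - E w‖ ≤ ‖(D (u - w)).comp S.subtypeL‖ + LA * ‖E (u - w)‖ := by
  have hsplit : ∀ v ∈ S, (A y - A (E w)) v = (D (u - w) + (A (E u) - A (E w))) v := by
    intro v hv
    have h' := h v hv
    simp only [sub_apply, add_apply] at h' ⊢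
    linarith
  refine (mul_norm_sub_le_of_forall_apply_eq S hAmono hy hEw hsplit).trans ?_
  rw [ContinuousLinearMap.add_comp, map_sub E]
  calc _ ≤ ‖(D (u - w)).comp S.subtypeL‖ + ‖(A (E u) - A (E w)).comp S.subtypeL‖ :=
        norm_add_le ((D (u - w)).comp S.subtypeL) _
    _ ≤ _ := by gcongr; exact (StrongDual.norm_comp_subtypeL_le S _).trans (hAlip _ _)

theorem min_mul_meshNorm_le
    (hnorm : ∀ x : X, ‖x‖ ^ 2 = ‖E x‖ ^ 2 + ‖D x‖ ^ 2 + ‖Γt x‖ ^ 2)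
    (hIBP : ∀ u v : X, (D u) (E v) + (D v) (E u) + ⟪Γ0 u, Γ0 v⟫ = ⟪Γt u, Γt v⟫)
    (hLA : 0 < LA) (hmA : 0 < mA) (hAlip : ∀ w v : Y, ‖A w - A v‖ ≤ LA * ‖w - v‖)
    (hAmono : ∀ w v : Y, mA * ‖w - v‖ ^ 2 ≤ (A w - A v) (w - v))
    (hlamδ : lamδ ∈ S) (hlb : lb ∈ S) (hEuδ : E uδ ∈ S) (hEub : E ub ∈ S)
    (horth₁ : ∀ v ∈ S, (A lamδ - A (E u)) v = D (u - uδ) v)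
    (hlb_eq : ∀ v ∈ S, (A lb - A (E u)) v = D (u - ub) v)
    (horth₂ : D (uδ - ub) (lamδ - E u)
      = (A (E uδ) - A (E u)) (E (uδ - ub)) + ⟪Γt (uδ - u), Γt (uδ - ub)⟫) :
    min 1 (min mA (mA / LA ^ 2)) * meshNorm E D Γt S (uδ - ub)
      ≤ (1 + √((1 + LA ^ 2) * (1 + 1 / mA ^ 2))) * ‖u - ub‖ := by
  have henergy := galerkin_error_energy_le hIBP hLA hmA.le hAlip hAmono hlamδ hlb hEuδ hEub
    horth₁ hlb_eq horth₂
  have hψ := mul_norm_sub_le_of_forall_apply_sub_eq hAlip hAmono hlb hEub hlb_eq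
  set φ := uδ - ub
  set z := u - ub
  set M := meshNorm E D Γt S φ
  have hEφ : E φ ∈ S := by rw [map_sub]; exact S.sub_mem hEuδ hEub
  have hz := mul_add_le_sqrt_mul_norm E D Γt S hnorm LA z
  have hφ := add_div_le_sqrt_mul_meshNorm E D Γt S mA φ
  have hM : M ^ 2 = ‖E φ‖ ^ 2 + ‖(D φ).comp S.subtypeL‖ ^ 2 + ‖Γt φ‖ ^ 2 :=
    Real.sq_sqrt (by positivity)
  have hlow : min 1 (min mA (mA / LA ^ 2)) * M ^ 2
      ≤ mA * ‖E φ‖ ^ 2 + mA / LA ^ 2 * ‖(D φ).comp S.subtypeL‖ ^ 2 + ‖Γt φ‖ ^ 2 := by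
    rw [hM, mul_add, mul_add]
    gcongr
    · exact (min_le_right 1 _).trans (min_le_left mA _)
    · exact (min_le_right 1 _).trans (min_le_right mA _)
    · exact mul_le_of_le_one_left (sq_nonneg _) (min_le_left 1 _)
  have hup : (LA * ‖E z‖ + ‖(D z).comp S.subtypeL‖) * ‖E φ‖
        + ‖(D φ).comp S.subtypeL‖ * ‖lb - E ub‖ + ‖Γ0 z‖ * ‖Γ0 φ‖
      ≤ (1 + √((1 + LA ^ 2) * (1 + 1 / mA ^ 2))) * ‖z‖ * M := by
    have hψ' : ‖lb - E ub‖ ≤ (LA * ‖E z‖ + ‖(D z).comp S.subtypeL‖) / mA := by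
      rw [le_div_iff₀ hmA]; linarith
    calc _ ≤ (LA * ‖E z‖ + ‖(D z).comp S.subtypeL‖) * ‖E φ‖
          + ‖(D φ).comp S.subtypeL‖ * ((LA * ‖E z‖ + ‖(D z).comp S.subtypeL‖) / mA) + ‖z‖ * M := by
          gcongr
          · exact norm_le_of_integration_by_parts hnorm hIBP z
          · exact norm_le_meshNorm_of_integration_by_parts hIBP hEφ
      _ = (LA * ‖E z‖ + ‖(D z).comp S.subtypeL‖) * (‖E φ‖ + ‖(D φ).comp S.subtypeL‖ / mA)
          + ‖z‖ * M := by ring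
      _ ≤ √(1 + LA ^ 2) * ‖z‖ * (√(1 + 1 / mA ^ 2) * M) + ‖z‖ * M := by gcongr
      _ = _ := by rw [Real.sqrt_mul (by positivity)]; ring
  exact mul_le_of_mul_sq_le_mul (Real.sqrt_nonneg _) (by positivity) (by linarith)

theorem mul_norm_sub_le_sqrt_mul_add_meshNorm
    (hnorm : ∀ x : X, ‖x‖ ^ 2 = ‖E x‖ ^ 2 + ‖D x‖ ^ 2 + ‖Γt x‖ ^ 2) (hLA : 0 ≤ LA)
    (hAlip : ∀ w v : Y, ‖A w - A v‖ ≤ LA * ‖w - v‖)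
    (hAmono : ∀ w v : Y, mA * ‖w - v‖ ^ 2 ≤ (A w - A v) (w - v))
    (hlamδ : lamδ ∈ S) (hEuδ : E uδ ∈ S) (horth₁ : ∀ v ∈ S, (A lamδ - A (E u)) v = D (u - uδ) v)
    (ub : X) :
    mA * ‖lamδ - E uδ‖ ≤ √(1 + LA ^ 2) * (‖u - ub‖ + meshNorm E D Γt S (uδ - ub)) := by
  have h := mul_norm_sub_le_of_forall_apply_sub_eq hAlip hAmono hlamδ hEuδ horth₁
  rw [show u - uδ = (u - ub) - (uδ - ub) by abel, map_sub D (u - ub), map_sub E (u - ub),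
    ContinuousLinearMap.sub_comp] at h
  calc mA * ‖lamδ - E uδ‖
      ≤ (LA * ‖E (u - ub)‖ + ‖(D (u - ub)).comp S.subtypeL‖)
        + (LA * ‖E (uδ - ub)‖ + ‖(D (uδ - ub)).comp S.subtypeL‖) := by
        refine h.trans ?_
        have hD := norm_sub_le ((D (u - ub)).comp S.subtypeL) ((D (uδ - ub)).comp S.subtypeL)
        have hE := mul_le_mul_of_nonneg_left (norm_sub_le (E (u - ub)) (E (uδ - ub))) hLA
        linarith
    _ ≤ √(1 + LA ^ 2) * ‖u - ub‖ + √(1 + LA ^ 2) * meshNorm E D Γt S (uδ - ub) :=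
        add_le_add (mul_add_le_sqrt_mul_norm E D Γt S hnorm LA _)
          (mul_add_le_sqrt_mul_meshNorm E D Γt S LA _)
    _ = _ := by ring

end Galerkin

theorem galerkin_error_le {Y X H : Type*} [NormedAddCommGroup Y] [InnerProductSpace ℝ Y]
    [NormedAddCommGroup X] [NormedSpace ℝ X] [NormedAddCommGroup H] [InnerProductSpace ℝ H]
    {E : X →L[ℝ] Y} {D : X →L[ℝ] StrongDual ℝ Y} {Γt Γ0 : X →L[ℝ] H} {A : Y → StrongDual ℝ Y}
    {S : Submodule ℝ Y} [CompleteSpace S] {Xδ : Submodule ℝ X} {u uδ ub : X} {lamδ : Y} {u₀ : H}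
    {LA mA mS C₁ : ℝ}
    (hnorm : ∀ x : X, ‖x‖ ^ 2 = ‖E x‖ ^ 2 + ‖D x‖ ^ 2 + ‖Γt x‖ ^ 2)
    (hIBP : ∀ u v : X, (D u) (E v) + (D v) (E u) + ⟪Γ0 u, Γ0 v⟫ = ⟪Γt u, Γt v⟫)
    (hLA : 0 < LA) (hmA : 0 < mA) (hAlip : ∀ w v : Y, ‖A w - A v‖ ≤ LA * ‖w - v‖)
    (hAmono : ∀ w v : Y, mA * ‖w - v‖ ^ 2 ≤ (A w - A v) (w - v))
    (hEXδ : ∀ x ∈ Xδ, E x ∈ S) (hu₀ : Γ0 u = u₀) (hlamδ : lamδ ∈ S) (huδ : uδ ∈ Xδ)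
    (horth₁ : ∀ v ∈ S, (A lamδ - A (E u)) v = D (u - uδ) v)
    (horth₂ : ∀ w ∈ Xδ, D w (lamδ - E u) = (A (E uδ) - A (E u)) (E w) + ⟪Γt (uδ - u), Γt w⟫)
    (hmS : mS = min 1 (min mA (mA / LA ^ 2)))
    (hC₁ : C₁ = 1 + (1 / mS) * (1 + Real.sqrt ((1 + LA ^ 2) * (1 + 1 / mA ^ 2))))
    (hub : ub ∈ Xδ) :
    ‖lamδ - E uδ‖ + (√(1 + LA ^ 2) / mA) * ‖u₀ - Γ0 uδ‖
      ≤ 2 * C₁ * (√(1 + LA ^ 2) / mA) * ‖u - ub‖ := by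
  obtain ⟨lb, hlb, hlb_eq⟩ :=
    S.exists_mem_forall_apply_eq A hLA hmA hAlip hAmono (A (E u) + D (u - ub))
  have hEuδ := hEXδ uδ huδ
  set M := meshNorm E D Γt S (uδ - ub)
  have hM : mS * M ≤ (1 + √((1 + LA ^ 2) * (1 + 1 / mA ^ 2))) * ‖u - ub‖ := by
    rw [hmS]
    refine min_mul_meshNorm_le hnorm hIBP hLA hmA hAlip hAmono hlamδ hlb hEuδ (hEXδ ub hub)
      horth₁ (fun v hv => ?_) (horth₂ _ (Xδ.sub_mem huδ hub))
    simp [hlb_eq v hv]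
  have hlam :=
    mul_norm_sub_le_sqrt_mul_add_meshNorm hnorm hLA.le hAlip hAmono hlamδ hEuδ horth₁ ub
  have hΓ : ‖u₀ - Γ0 uδ‖ ≤ ‖u - ub‖ + M := by
    have hEφ : E (uδ - ub) ∈ S := by simpa using S.sub_mem hEuδ (hEXδ ub hub)
    rw [← hu₀, ← map_sub, show u - uδ = (u - ub) - (uδ - ub) by abel, map_sub]
    exact (norm_sub_le _ _).trans (add_le_add (norm_le_of_integration_by_parts hnorm hIBP _)
      (norm_le_meshNorm_of_integration_by_parts hIBP hEφ))
  have hmS_pos : 0 < mS := by rw [hmS]; exact lt_min one_pos (lt_min hmA (by positivity))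
  have hM' : M ≤ (1 + √((1 + LA ^ 2) * (1 + 1 / mA ^ 2))) * ‖u - ub‖ / mS := by
    rw [le_div_iff₀ hmS_pos]; linarith
  have hlam' : ‖lamδ - E uδ‖ ≤ √(1 + LA ^ 2) / mA * (‖u - ub‖ + M) := by
    rw [div_mul_eq_mul_div, le_div_iff₀ hmA]; linarith
  calc _ ≤ √(1 + LA ^ 2) / mA * (‖u - ub‖ + M) + √(1 + LA ^ 2) / mA * (‖u - ub‖ + M) := by
        gcongr
    _ ≤ 2 * (√(1 + LA ^ 2) / mA)
        * (‖u - ub‖ + (1 + √((1 + LA ^ 2) * (1 + 1 / mA ^ 2))) * ‖u - ub‖ / mS) := by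
        linarith [mul_le_mul_of_nonneg_left hM' (by positivity : 0 ≤ √(1 + LA ^ 2) / mA)]
    _ = _ := by rw [hC₁]; ring

theorem lambda_minus_u_bound_general
    {Y X H : Type*}
    [NormedAddCommGroup Y] [InnerProductSpace ℝ Y] [CompleteSpace Y]
    [NormedAddCommGroup X] [InnerProductSpace ℝ X]
    [NormedAddCommGroup H] [InnerProductSpace ℝ H]
    (E : X →L[ℝ] Y) (D : X →L[ℝ] StrongDual ℝ Y) (Γt : X →L[ℝ] H)
    (hnorm : ∀ x : X, ‖x‖ ^ 2 = ‖E x‖ ^ 2 + ‖D x‖ ^ 2 + ‖Γt x‖ ^ 2)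
    (A : Y → StrongDual ℝ Y) (LA mA : ℝ) (hLA : 0 < LA) (hmA : 0 < mA)
    (hAlip : ∀ w v : Y, ‖A w - A v‖ ≤ LA * ‖w - v‖)
    (hAmono : ∀ w v : Y, (A w - A v) (w - v) ≥ mA * ‖w - v‖ ^ 2)
    (Γ0 : X →L[ℝ] H)
    (hIBP : ∀ u v : X,
      (D u) (E v) + (D v) (E u) + ⟪Γ0 u, Γ0 v⟫ = ⟪Γt u, Γt v⟫)
    (Yδ : Submodule ℝ Y) (hYδ : IsClosed (Yδ : Set Y))
    (Xδ : Submodule ℝ X)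
    (hEXδ : ∀ x ∈ Xδ, E x ∈ Yδ)
    (ℓ : StrongDual ℝ Y) (u₀ : H) (u : X)
    (hu : D u + A (E u) = ℓ ∧ Γ0 u = u₀)
    (lamδ : Y) (uδ : X) (hlamδ : lamδ ∈ Yδ) (huδ : uδ ∈ Xδ)
    (hGal₁ : ∀ v ∈ Yδ, (A lamδ) v + (D uδ) v = ℓ v)
    (hGal₂ : ∀ w ∈ Xδ, (D w) lamδ - (A (E uδ)) (E w) - ⟪Γt uδ, Γt w⟫
        = -(ℓ (E w)) - ⟪u₀, Γ0 w⟫)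
    (mS C₁ : ℝ)
    (hmS : mS = min 1 (min mA (mA / LA ^ 2)))
    (hC₁ : C₁ = 1 + (1 / mS) * (1 + Real.sqrt ((1 + LA ^ 2) * (1 + 1 / mA ^ 2)))) :
    ‖lamδ - E uδ‖ + (Real.sqrt (1 + LA ^ 2) / mA) * ‖u₀ - Γ0 uδ‖
      ≤ 2 * C₁ * (Real.sqrt (1 + LA ^ 2) / mA) * ⨅ z : Xδ, ‖u - (z : X)‖ := by
  obtain ⟨hℓ, hu₀⟩ := hu
  have : CompleteSpace Yδ := hYδ.completeSpace_coe
  have horth₁ := galerkin_orthogonality_fst hℓ hGal₁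
  have horth₂ := galerkin_orthogonality_snd hIBP hℓ hu₀ hGal₂
  have hC₁_nonneg : 0 ≤ C₁ := by rw [hC₁, hmS]; positivity
  rw [Real.mul_iInf_of_nonneg (by positivity)]
  exact le_ciInf fun ub => galerkin_error_le hnorm hIBP hLA hmA hAlip hAmono hEXδ hu₀ hlamδ huδ
    horth₁ horth₂ hmS hC₁ ub.2

/-- Bound on `‖λ^δ − E u^δ‖_Y` plus the weighted initial trace error by the
best approximation error from `X^δ`. -/
theorem lambda_minus_u_bound
    {Y X H : Type*}
    [NormedAddCommGroup Y] [InnerProductSpace ℝ Y] [CompleteSpace Y]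
    [NormedAddCommGroup X] [InnerProductSpace ℝ X] [CompleteSpace X]
    [NormedAddCommGroup H] [InnerProductSpace ℝ H] [CompleteSpace H]
    (E : X →L[ℝ] Y) (D : X →L[ℝ] StrongDual ℝ Y) (Γt : X →L[ℝ] H)
    (hnorm : ∀ x : X, ‖x‖ ^ 2 = ‖E x‖ ^ 2 + ‖D x‖ ^ 2 + ‖Γt x‖ ^ 2)
    (A : Y → StrongDual ℝ Y) (LA mA : ℝ) (hLA : 0 < LA) (hmA : 0 < mA)
    (hAlip : ∀ w v : Y, ‖A w - A v‖ ≤ LA * ‖w - v‖)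
    (hAmono : ∀ w v : Y, (A w - A v) (w - v) ≥ mA * ‖w - v‖ ^ 2)
    (Γ0 : X →L[ℝ] H)
    (hIBP : ∀ u v : X,
      (D u) (E v) + (D v) (E u) + ⟪Γ0 u, Γ0 v⟫ = ⟪Γt u, Γt v⟫)
    (Yδ : Submodule ℝ Y) (hYδ : IsClosed (Yδ : Set Y))
    (Xδ : Submodule ℝ X) (hXδ : IsClosed (Xδ : Set X))
    (hEXδ : ∀ x ∈ Xδ, E x ∈ Yδ)
    (ℓ : StrongDual ℝ Y) (u₀ : H) (u : X)
    (hu : D u + A (E u) = ℓ ∧ Γ0 u = u₀)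
    (lamδ : Y) (uδ : X) (hlamδ : lamδ ∈ Yδ) (huδ : uδ ∈ Xδ)
    (hGal₁ : ∀ v ∈ Yδ, (A lamδ) v + (D uδ) v = ℓ v)
    (hGal₂ : ∀ w ∈ Xδ, (D w) lamδ - (A (E uδ)) (E w) - ⟪Γt uδ, Γt w⟫
        = -(ℓ (E w)) - ⟪u₀, Γ0 w⟫)
    (mS C₁ : ℝ)
    (hmS : mS = min 1 (min mA (mA / LA ^ 2)))
    (hC₁ : C₁ = 1 + (1 / mS) * (1 + Real.sqrt ((1 + LA ^ 2) * (1 + 1 / mA ^ 2)))) :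
    ‖lamδ - E uδ‖ + (Real.sqrt (1 + LA ^ 2) / mA) * ‖u₀ - Γ0 uδ‖
      ≤ 2 * C₁ * (Real.sqrt (1 + LA ^ 2) / mA) * ⨅ z : Xδ, ‖u - (z : X)‖ :=
  lambda_minus_u_bound_general E D Γt hnorm A LA mA hLA hmA hAlip hAmono Γ0 hIBP Yδ hYδ Xδ hEXδ ℓ u₀
    u hu lamδ uδ hlamδ huδ hGal₁ hGal₂ mS C₁ hmS hC₁
end

section
/- Let ϱ > 0, set λ_δ := A⁻¹(ℓ − D u^δ) ∈ Y, and suppose the a posteriori condition ‖λ_δ − λ^δ‖_Y ≤ ϱ·(‖λ^δ − E u^δ‖_Y + (√(1 + L_A²)/m_A)·‖u₀ − Γ_0 u^δ‖_H) holds. Then the error estimator η := √(‖λ^δ − E u^δ‖_Y² + ‖u₀ − Γ_0 u^δ‖_H²) is efficient and reliable: (m_A/√(1 + L_A² + m_A²))·η ≤ ‖u − u^δ‖_X ≤ (1/m_S)·(1 + 1/m_A)·√(L_A²·ϱ² + (L_A·ϱ·√(1 + L_A²)/m_A + 1)²)·η. -/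
open NormedSpace
open scoped RealInnerProductSpace

/-!
Write `e = u - uδ`, let `ν ∈ Y` be the Riesz representative of `D e`, and put
`λ̄ = A⁻¹ (ℓ - D uδ)`, `ζ = λ̄ - E u`. Integration by parts turns the norm identity into
`‖e‖² = ‖E e + ν‖² + ‖Γ₀ e‖²`, where `Γ₀ e = u₀ - Γ₀ uδ`.

Efficiency: testing the first Galerkin equation with `λ^δ - E uδ` and using strong monotonicity
gives `m_A ‖λ^δ - E uδ‖ ≤ ‖D e‖ + L_A ‖E e‖`; Cauchy–Schwarz does the rest.

Reliability: `A λ̄ - A (E u) = D e`, so `E e + ν = (λ̄ - E uδ) + (ν - ζ)`, and monotonicity gives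
`‖ν - ζ‖² ≤ (1 + L_A² - 2 m_A) ‖ζ‖²`. Nonnegativity of `‖Γ_T e‖²` bounds `‖ζ‖` by
`‖λ̄ - E uδ‖` and `‖u₀ - Γ₀ uδ‖`, and the a posteriori condition bounds `‖λ̄ - E uδ‖` by the
estimator. What is left is an inequality between constants, which holds because
`m_A / m_S ≥ max 1 L_A²`. If `L_A < m_A`, then `Y` is trivial.
-/

theorem le_add_of_sq_le_mul_add_sq_s17 {z β γ : ℝ} (hβ : 0 ≤ β) (hγ : 0 ≤ γ)
    (h : z ^ 2 ≤ β * z + γ ^ 2) : z ≤ β + γ := by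
  by_contra! hz
  nlinarith [mul_le_mul_of_nonneg_left hz.le hγ]

section MonotonePair

variable {Y : Type*} [NormedAddCommGroup Y] [InnerProductSpace ℝ Y] {ν ζ v : Y} {m L : ℝ}

theorem norm_sub_sq_le_of_monotone_of_lipschitz (hmono : m * ‖ζ‖ ^ 2 ≤ ⟪ν, ζ⟫)
    (hlip : ‖ν‖ ≤ L * ‖ζ‖) : ‖ν - ζ‖ ^ 2 ≤ (1 + L ^ 2 - 2 * m) * ‖ζ‖ ^ 2 := by
  have hν : ‖ν‖ ^ 2 ≤ (L * ‖ζ‖) ^ 2 := pow_le_pow_left₀ (norm_nonneg ν) hlip 2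
  rw [norm_sub_sq_real]
  nlinarith

theorem norm_le_of_monotone_of_lipschitz {w b : ℝ} (hm : 0 < m) (hL : 0 ≤ L) (hw : 0 < w)
    (hw2 : w ^ 2 = 2 * m) (hb : 0 ≤ b) (hmono : m * ‖ζ‖ ^ 2 ≤ ⟪ν, ζ⟫)
    (hlip : ‖ν‖ ≤ L * ‖ζ‖) (hpos : 0 ≤ b ^ 2 + 2 * ⟪ν, v - ζ⟫) :
    ‖ζ‖ ≤ L / m * ‖v‖ + b / w := by
  apply le_add_of_sq_le_mul_add_sq_s17 (by positivity) (by positivity)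
  have hνv : ⟪ν, v⟫ ≤ L * ‖ζ‖ * ‖v‖ :=
    (real_inner_le_norm ν v).trans (mul_le_mul_of_nonneg_right hlip (norm_nonneg v))
  have : m * ‖ζ‖ ^ 2 ≤ m * (L / m * ‖v‖ * ‖ζ‖ + (b / w) ^ 2) := by
    rw [inner_sub_right] at hpos
    rw [div_pow, hw2]
    field_simp
    nlinarith
  exact le_of_mul_le_mul_left this hm

theorem norm_add_sub_le_of_monotone_of_lipschitz {θ w b : ℝ} (hm : 0 < m) (hL : 0 ≤ L)
    (hθ : 0 ≤ θ) (hθ2 : θ ^ 2 = 1 + L ^ 2 - 2 * m) (hw : 0 < w) (hw2 : w ^ 2 = 2 * m)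
    (hb : 0 ≤ b) (hmono : m * ‖ζ‖ ^ 2 ≤ ⟪ν, ζ⟫) (hlip : ‖ν‖ ≤ L * ‖ζ‖)
    (hpos : 0 ≤ b ^ 2 + 2 * ⟪ν, v - ζ⟫) :
    ‖v + (ν - ζ)‖ ≤ (L ^ 2 + 1 / 2) / m * ‖v‖ + θ / w * b := by
  have hνζ : ‖ν - ζ‖ ≤ θ * ‖ζ‖ := by
    rw [← pow_le_pow_iff_left₀ (norm_nonneg _) (by positivity) two_ne_zero, mul_pow, hθ2]
    exact norm_sub_sq_le_of_monotone_of_lipschitz hmono hlip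
  have hζ := norm_le_of_monotone_of_lipschitz hm hL hw hw2 hb hmono hlip hpos
  -- AM-GM: `2 θ L ≤ θ² + L²`
  have hθL : θ * L ≤ L ^ 2 - m + 1 / 2 := by nlinarith [sq_nonneg (θ - L)]
  calc ‖v + (ν - ζ)‖ ≤ ‖v‖ + θ * ‖ζ‖ := (norm_add_le _ _).trans (by gcongr)
    _ ≤ ‖v‖ + θ * (L / m * ‖v‖ + b / w) := by gcongr
    _ = (m + θ * L) / m * ‖v‖ + θ / w * b := by field_simp; ring
    _ ≤ (L ^ 2 + 1 / 2) / m * ‖v‖ + θ / w * b := by gcongr ?_ / m * ‖v‖ + _; linarith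

end MonotonePair

-- `(L² + 1/2) / m` and `θ / w` are the coefficients in the stability estimate
-- `norm_sub_sq_le_of_residual`, and `K` plays the role of `(1 + 1/m) / m_S`.
theorem sq_add_half_div_le_mul {m L K : ℝ} (hm : 0 < m) (hmL : m ≤ L)
    (hK₁ : m + 1 ≤ K * m ^ 2) (hK₂ : (m + 1) * L ^ 2 ≤ K * m ^ 2) :
    (L ^ 2 + 1 / 2) / m ≤ K * L := by
  rw [div_le_iff₀ hm]
  rcases le_total L 1 with hL | hL
  · nlinarith [mul_le_mul_of_nonneg_right hK₁ (hm.le.trans hmL),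
      mul_nonneg hm.le (sub_nonneg.2 hL)]
  · nlinarith [mul_le_mul_of_nonneg_right hK₂ (hm.le.trans hmL)]

theorem sq_add_half_div_sq_add_sq_add_one_le {m L K θ w : ℝ} (hm : 0 < m) (hmL : m ≤ L)
    (hθ2 : θ ^ 2 = 1 + L ^ 2 - 2 * m) (hw2 : w ^ 2 = 2 * m)
    (hK₁ : m + 1 ≤ K * m ^ 2) (hK₂ : (m + 1) * L ^ 2 ≤ K * m ^ 2) :
    ((L ^ 2 + 1 / 2) / m) ^ 2 + (θ / w) ^ 2 + 1 ≤ K ^ 2 := by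
  have hm2 : m ^ 2 ≤ L ^ 2 := pow_le_pow_left₀ hm.le hmL 2
  have key : (L ^ 2 + 1 / 2) ^ 2 * m ^ 2 + (1 + L ^ 2 - 2 * m) * m ^ 3 / 2 + m ^ 4
      ≤ (K * m ^ 2) ^ 2 := by
    rcases le_total L 1 with hL | hL
    · have h1 : m ≤ 1 := hmL.trans hL
      have : (m + 1) ^ 2 ≤ (K * m ^ 2) ^ 2 := pow_le_pow_left₀ (by positivity) hK₁ 2
      nlinarith [mul_nonneg hm.le (sub_nonneg.2 h1), pow_le_pow_left₀ (hm.le.trans hmL) hL 2,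
        mul_pos hm hm]
    · have : ((m + 1) * L ^ 2) ^ 2 ≤ (K * m ^ 2) ^ 2 := pow_le_pow_left₀ (by positivity) hK₂ 2
      have h3 : L ^ 3 ≤ L ^ 4 := pow_le_pow_right₀ hL (by norm_num)
      have h4 : L ^ 2 ≤ L ^ 4 := pow_le_pow_right₀ hL (by norm_num)
      have h5 : m ^ 3 ≤ L ^ 3 := pow_le_pow_left₀ hm.le hmL 3
      have h6 : L ^ 2 * m ^ 2 ≤ m * L ^ 3 := by
        nlinarith [mul_le_mul_of_nonneg_left hmL (mul_nonneg hm.le (sq_nonneg L))]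
      nlinarith [mul_le_mul_of_nonneg_left h3 hm.le,
        mul_le_mul_of_nonneg_left hm2 (mul_nonneg hm.le (sq_nonneg L))]
  rw [div_pow, div_pow, hθ2, hw2]
  calc _ = ((L ^ 2 + 1 / 2) ^ 2 * m ^ 2 + (1 + L ^ 2 - 2 * m) * m ^ 3 / 2 + m ^ 4) / m ^ 4 := by
        field_simp
    _ ≤ (K * m ^ 2) ^ 2 / m ^ 4 := by gcongr
    _ = K ^ 2 := by field_simp

theorem three_mul_sq_add_half_div_sq_add_sq_le {m L K θ w : ℝ} (hm : 0 < m) (hmL : m ≤ L)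
    (hθ2 : θ ^ 2 = 1 + L ^ 2 - 2 * m) (hw2 : w ^ 2 = 2 * m)
    (hK₁ : m + 1 ≤ K * m ^ 2) (hK₂ : (m + 1) * L ^ 2 ≤ K * m ^ 2) :
    3 * ((L ^ 2 + 1 / 2) / m) ^ 2 + (θ / w) ^ 2 ≤ 2 * K ^ 2 * L := by
  have hL0 : 0 ≤ L := hm.le.trans hmL
  have key : 3 * (L ^ 2 + 1 / 2) ^ 2 * m ^ 2 + (1 + L ^ 2 - 2 * m) * m ^ 3 / 2
      ≤ 2 * (K * m ^ 2) ^ 2 * L := by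
    rcases le_total L 1 with hL | hL
    · have hK : (m + 1) ^ 2 ≤ (K * m ^ 2) ^ 2 := pow_le_pow_left₀ (by positivity) hK₁ 2
      have h1 : m ≤ 1 := hmL.trans hL
      have hL2 : L ^ 2 ≤ 1 := by nlinarith
      have h2 : 3 * (L ^ 2 + 1 / 2) ^ 2 * m + (1 + L ^ 2 - 2 * m) * m ^ 2 / 2
          ≤ 2 * (m + 1) ^ 2 := by
        nlinarith [mul_nonneg hm.le (sub_nonneg.2 h1), mul_nonneg hm.le (sub_nonneg.2 hL2),
          mul_nonneg (mul_nonneg hm.le hm.le) (sub_nonneg.2 hL2), sq_nonneg (m - 1)]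
      nlinarith [mul_le_mul_of_nonneg_left hmL
          (mul_nonneg (sq_nonneg m) (sq_nonneg (L ^ 2 + 1 / 2))),
        mul_le_mul_of_nonneg_left hmL
          (mul_nonneg (sq_nonneg m) (sub_nonneg.2 (by nlinarith : 2 * m ≤ 1 + L ^ 2))),
        mul_le_mul_of_nonneg_left hK hL0, mul_le_mul_of_nonneg_left h2 (mul_nonneg hm.le hL0)]
    · have hK : ((m + 1) * L ^ 2) ^ 2 ≤ (K * m ^ 2) ^ 2 := pow_le_pow_left₀ (by positivity) hK₂ 2
      have h2 : m ^ 2 ≤ m * L := by nlinarith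
      have h3 : m ^ 3 ≤ L ^ 3 := pow_le_pow_left₀ hm.le hmL 3
      have h4 : L ^ 2 ≤ L ^ 5 := pow_le_pow_right₀ hL (by norm_num)
      have h5 : L ^ 2 ≤ L ^ 3 := pow_le_pow_right₀ hL (by norm_num)
      have h6 : L ^ 3 ≤ L ^ 5 := pow_le_pow_right₀ hL (by norm_num)
      have h7 : m ^ 2 ≤ L ^ 2 := pow_le_pow_left₀ hm.le hmL 2
      have h8 : 3 * (L ^ 2 + 1 / 2) ^ 2 * m ^ 2 + (1 + L ^ 2 - 2 * m) * m ^ 3 / 2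
          ≤ 2 * ((m + 1) * L ^ 2) ^ 2 * L := by
        nlinarith [mul_le_mul_of_nonneg_left h2 (pow_nonneg hL0 4),
          mul_le_mul_of_nonneg_left h4 (sq_nonneg m), mul_le_mul_of_nonneg_left h2 (sq_nonneg L),
          mul_le_mul_of_nonneg_left h5 hm.le, mul_le_mul_of_nonneg_left (h5.trans h6) hm.le,
          mul_le_mul_of_nonneg_left h3 (sq_nonneg L), pow_pos hm 4, h7.trans h4]
      nlinarith [mul_le_mul_of_nonneg_left hK hL0]
  rw [div_pow, div_pow, hθ2, hw2]
  calc _ = (3 * (L ^ 2 + 1 / 2) ^ 2 * m ^ 2 + (1 + L ^ 2 - 2 * m) * m ^ 3 / 2) / m ^ 4 := by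
        field_simp
    _ ≤ 2 * (K * m ^ 2) ^ 2 * L / m ^ 4 := by gcongr
    _ = 2 * K ^ 2 * L := by field_simp

theorem sq_add_half_div_mul_le {m L K θ w p : ℝ} (hm : 0 < m) (hmL : m ≤ L) (hθ : 0 ≤ θ)
    (hθ2 : θ ^ 2 = 1 + L ^ 2 - 2 * m) (hw : 0 < w) (hw2 : w ^ 2 = 2 * m) (hp : 1 ≤ p)
    (hK₁ : m + 1 ≤ K * m ^ 2) (hK₂ : (m + 1) * L ^ 2 ≤ K * m ^ 2) :
    (L ^ 2 + 1 / 2) / m * ((L ^ 2 + 1 / 2) / m + p * (θ / w)) ≤ K ^ 2 * L * p := by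
  have h := three_mul_sq_add_half_div_sq_add_sq_le hm hmL hθ2 hw2 hK₁ hK₂
  set C₁ := (L ^ 2 + 1 / 2) / m
  set C₂ := θ / w
  have hC₁ : 0 ≤ C₁ := by positivity
  have hC₂ : 0 ≤ C₂ := by positivity
  nlinarith [sq_nonneg (C₁ - C₂), mul_le_mul_of_nonneg_left hp (mul_nonneg hC₁ hC₂),
    mul_le_mul_of_nonneg_right hp (sq_nonneg C₁)]

theorem le_mul_sqrt_mul_sqrt_of_sq_le {x C₁ C₂ K L p ϱ a b d : ℝ} (hx : 0 ≤ x) (hC₁ : 0 ≤ C₁)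
    (hC₂ : 0 ≤ C₂) (hK : 0 ≤ K) (hϱ : 0 ≤ ϱ) (hb : 0 ≤ b) (hd : 0 ≤ d)
    (h₁ : C₁ ≤ K * L) (h₂ : C₁ * (C₁ + p * C₂) ≤ K ^ 2 * L * p) (h₃ : C₁ ^ 2 + C₂ ^ 2 + 1 ≤ K ^ 2)
    (hdab : d ≤ (1 + ϱ) * a + ϱ * p * b) (hxd : x ^ 2 ≤ (C₁ * d + C₂ * b) ^ 2 + b ^ 2) :
    x ≤ K * √(L ^ 2 * ϱ ^ 2 + (L * ϱ * p + 1) ^ 2) * √(a ^ 2 + b ^ 2) := by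
  set α := C₁ * (1 + ϱ)
  set β := C₁ * ϱ * p + C₂
  have hlin : C₁ * d + C₂ * b ≤ α * a + β * b := by
    have := mul_le_mul_of_nonneg_left hdab hC₁
    linarith
  have hcoef : α ^ 2 + β ^ 2 + 1 ≤ K ^ 2 * (L ^ 2 * ϱ ^ 2 + (L * ϱ * p + 1) ^ 2) := by
    have hsq : C₁ ^ 2 ≤ (K * L) ^ 2 := pow_le_pow_left₀ hC₁ h₁ 2
    nlinarith [mul_le_mul_of_nonneg_right hsq
        (mul_nonneg (sq_nonneg ϱ) (add_nonneg zero_le_one (sq_nonneg p))),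
      mul_le_mul_of_nonneg_right h₂ hϱ]
  have hx2 : x ^ 2 ≤ (K * √(L ^ 2 * ϱ ^ 2 + (L * ϱ * p + 1) ^ 2) * √(a ^ 2 + b ^ 2)) ^ 2 := by
    rw [mul_pow, mul_pow, Real.sq_sqrt (by positivity), Real.sq_sqrt (by positivity)]
    calc x ^ 2 ≤ (α * a + β * b) ^ 2 + b ^ 2 := hxd.trans (by gcongr)
      _ ≤ (α ^ 2 + β ^ 2 + 1) * (a ^ 2 + b ^ 2) := by
          nlinarith [sq_nonneg (α * b - β * a), sq_nonneg a]
      _ ≤ _ := by gcongr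
  exact (pow_le_pow_iff_left₀ hx (by positivity) two_ne_zero).1 hx2

theorem max_le_div_min {m L : ℝ} (hm : 0 < m) (hL : 0 < L) :
    max m (max 1 (L ^ 2)) ≤ m / min 1 (min m (m / L ^ 2)) := by
  have hmS : 0 < min 1 (min m (m / L ^ 2)) := by positivity
  refine max_le (le_div_self hm.le hmS (min_le_left _ _)) (max_le ?_ ?_)
  · rw [le_div_iff₀ hmS, one_mul]
    exact (min_le_right _ _).trans (min_le_left _ _)
  · rw [le_div_iff₀ hmS, ← le_div_iff₀' (by positivity)]
    exact (min_le_right _ _).trans (min_le_right _ _)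

section Setting

variable {Y X H : Type*} [NormedAddCommGroup Y] [InnerProductSpace ℝ Y]
  [NormedAddCommGroup X] [NormedSpace ℝ X] [NormedAddCommGroup H] [InnerProductSpace ℝ H]

theorem apply_le_norm_mul_norm (f : StrongDual ℝ Y) (y : Y) : f y ≤ ‖f‖ * ‖y‖ :=
  (Real.le_norm_self _).trans (f.le_opNorm y)

theorem eq_zero_of_lipschitz_lt_monotone {A : Y → StrongDual ℝ Y} {L m : ℝ} (hLm : L < m)
    (hAlip : ∀ w v : Y, ‖A w - A v‖ ≤ L * ‖w - v‖)
    (hAmono : ∀ w v : Y, (A w - A v) (w - v) ≥ m * ‖w - v‖ ^ 2) (y : Y) : y = 0 := by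
  have hle : (A y - A 0) (y - 0) ≤ L * ‖y - 0‖ * ‖y - 0‖ :=
    (apply_le_norm_mul_norm _ _).trans (by gcongr; exact hAlip y 0)
  have : ‖y - 0‖ ^ 2 ≤ 0 := by nlinarith [hAmono y 0]
  simpa using this

theorem norm_sq_add_two_mul_apply_eq (E : X →L[ℝ] Y) (D : X →L[ℝ] StrongDual ℝ Y)
    (Γt Γ0 : X →L[ℝ] H)
    (hIBP : ∀ u v : X, (D u) (E v) + (D v) (E u) + ⟪Γ0 u, Γ0 v⟫ = ⟪Γt u, Γt v⟫) (x : X) :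
    ‖Γ0 x‖ ^ 2 + 2 * D x (E x) = ‖Γt x‖ ^ 2 := by
  have := hIBP x x
  rw [real_inner_self_eq_norm_sq, real_inner_self_eq_norm_sq] at this
  linarith

theorem norm_sq_eq_norm_add_toDual_symm_sq_add [CompleteSpace Y] (E : X →L[ℝ] Y)
    (D : X →L[ℝ] StrongDual ℝ Y) (Γt Γ0 : X →L[ℝ] H)
    (hnorm : ∀ x : X, ‖x‖ ^ 2 = ‖E x‖ ^ 2 + ‖D x‖ ^ 2 + ‖Γt x‖ ^ 2)
    (hIBP : ∀ u v : X, (D u) (E v) + (D v) (E u) + ⟪Γ0 u, Γ0 v⟫ = ⟪Γt u, Γt v⟫) (x : X) :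
    ‖x‖ ^ 2 = ‖E x + (InnerProductSpace.toDual ℝ Y).symm (D x)‖ ^ 2 + ‖Γ0 x‖ ^ 2 := by
  rw [hnorm, norm_add_sq_real, LinearIsometryEquiv.norm_map, real_inner_comm,
    InnerProductSpace.toDual_symm_apply, ← norm_sq_add_two_mul_apply_eq E D Γt Γ0 hIBP x]
  ring

theorem mul_norm_sub_le_of_galerkin {E : X →L[ℝ] Y} {D : X →L[ℝ] StrongDual ℝ Y}
    {A : Y → StrongDual ℝ Y} {L m : ℝ} (hL : 0 ≤ L) (hAlip : ∀ w v : Y, ‖A w - A v‖ ≤ L * ‖w - v‖)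
    (hAmono : ∀ w v : Y, (A w - A v) (w - v) ≥ m * ‖w - v‖ ^ 2) {ℓ : StrongDual ℝ Y}
    {u uδ : X} {lamδ : Y} (hu : D u + A (E u) = ℓ)
    (hGal : (A lamδ) (lamδ - E uδ) + (D uδ) (lamδ - E uδ) = ℓ (lamδ - E uδ)) :
    m * ‖lamδ - E uδ‖ ≤ ‖D (u - uδ)‖ + L * ‖E (u - uδ)‖ := by
  set v := lamδ - E uδ
  have hsplit : (A lamδ - A (E uδ)) v = D (u - uδ) v + (A (E u) - A (E uδ)) v := by
    simp only [← hu, map_sub, sub_apply, add_apply] at hGal ⊢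
    linarith
  have hA : (A (E u) - A (E uδ)) v ≤ L * ‖E (u - uδ)‖ * ‖v‖ :=
    (apply_le_norm_mul_norm _ _).trans (by rw [map_sub]; gcongr; exact hAlip _ _)
  have : m * ‖v‖ * ‖v‖ ≤ (‖D (u - uδ)‖ + L * ‖E (u - uδ)‖) * ‖v‖ := by
    nlinarith [hAmono lamδ (E uδ), apply_le_norm_mul_norm (D (u - uδ)) v]
  rcases (norm_nonneg v).eq_or_lt with hv | hv
  · rw [← hv, mul_zero]
    positivity
  · exact le_of_mul_le_mul_right this hv

theorem estimator_efficient [CompleteSpace Y] (E : X →L[ℝ] Y) (D : X →L[ℝ] StrongDual ℝ Y)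
    (Γt Γ0 : X →L[ℝ] H) (hnorm : ∀ x : X, ‖x‖ ^ 2 = ‖E x‖ ^ 2 + ‖D x‖ ^ 2 + ‖Γt x‖ ^ 2)
    (hIBP : ∀ u v : X, (D u) (E v) + (D v) (E u) + ⟪Γ0 u, Γ0 v⟫ = ⟪Γt u, Γt v⟫)
    {A : Y → StrongDual ℝ Y} {LA mA : ℝ} (hLA : 0 ≤ LA) (hmA : 0 < mA)
    (hAlip : ∀ w v : Y, ‖A w - A v‖ ≤ LA * ‖w - v‖)
    (hAmono : ∀ w v : Y, (A w - A v) (w - v) ≥ mA * ‖w - v‖ ^ 2)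
    {ℓ : StrongDual ℝ Y} {u₀ : H} {u uδ : X} {lamδ : Y} (hu : D u + A (E u) = ℓ ∧ Γ0 u = u₀)
    (hGal : (A lamδ) (lamδ - E uδ) + (D uδ) (lamδ - E uδ) = ℓ (lamδ - E uδ)) :
    mA / √(1 + LA ^ 2 + mA ^ 2) * √(‖lamδ - E uδ‖ ^ 2 + ‖u₀ - Γ0 uδ‖ ^ 2) ≤ ‖u - uδ‖ := by
  set e := u - uδ
  have hΓ : Γ0 e = u₀ - Γ0 uδ := by rw [map_sub, hu.2]
  have hb : ‖u₀ - Γ0 uδ‖ ^ 2 ≤ ‖e‖ ^ 2 := by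
    rw [norm_sq_eq_norm_add_toDual_symm_sq_add E D Γt Γ0 hnorm hIBP e, hΓ]
    exact le_add_of_nonneg_left (sq_nonneg _)
  have ha : mA ^ 2 * ‖lamδ - E uδ‖ ^ 2 ≤ (1 + LA ^ 2) * ‖e‖ ^ 2 := by
    have hgal := mul_norm_sub_le_of_galerkin hLA hAlip hAmono hu.1 hGal
    nlinarith [hnorm e, sq_nonneg (LA * ‖D e‖ - ‖E e‖), sq_nonneg ‖Γt e‖,
      pow_le_pow_left₀ (by positivity) hgal 2]
  rw [div_mul_eq_mul_div, div_le_iff₀ (by positivity),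
    ← pow_le_pow_iff_left₀ (by positivity) (by positivity) two_ne_zero, mul_pow, mul_pow,
    Real.sq_sqrt (by positivity), Real.sq_sqrt (by positivity)]
  nlinarith

theorem norm_sub_sq_le_of_residual [CompleteSpace Y] (E : X →L[ℝ] Y)
    (D : X →L[ℝ] StrongDual ℝ Y) (Γt Γ0 : X →L[ℝ] H)
    (hnorm : ∀ x : X, ‖x‖ ^ 2 = ‖E x‖ ^ 2 + ‖D x‖ ^ 2 + ‖Γt x‖ ^ 2)
    (hIBP : ∀ u v : X, (D u) (E v) + (D v) (E u) + ⟪Γ0 u, Γ0 v⟫ = ⟪Γt u, Γt v⟫)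
    {A : Y → StrongDual ℝ Y} {LA mA : ℝ} (hmA : 0 < mA) (hmL : mA ≤ LA)
    (hAlip : ∀ w v : Y, ‖A w - A v‖ ≤ LA * ‖w - v‖)
    (hAmono : ∀ w v : Y, (A w - A v) (w - v) ≥ mA * ‖w - v‖ ^ 2)
    {ℓ : StrongDual ℝ Y} {u₀ : H} {u uδ : X} (hu : D u + A (E u) = ℓ ∧ Γ0 u = u₀)
    {lam : Y} (hlam : A lam = ℓ - D uδ) :
    ‖u - uδ‖ ^ 2 ≤ ((LA ^ 2 + 1 / 2) / mA * ‖lam - E uδ‖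
        + √(1 + LA ^ 2 - 2 * mA) / √(2 * mA) * ‖u₀ - Γ0 uδ‖) ^ 2 + ‖u₀ - Γ0 uδ‖ ^ 2 := by
  set e := u - uδ
  set v := lam - E uδ
  set ζ := lam - E u
  set ν := (InnerProductSpace.toDual ℝ Y).symm (D e)
  have hDe : D e = A lam - A (E u) := by rw [map_sub, hlam, ← hu.1]; abel
  have hEe : E e = v - ζ := by simp only [e, v, ζ, map_sub]; abel
  have hΓ : Γ0 e = u₀ - Γ0 uδ := by rw [map_sub, hu.2]
  have hmono : mA * ‖ζ‖ ^ 2 ≤ ⟪ν, ζ⟫ := by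
    rw [InnerProductSpace.toDual_symm_apply, hDe]; exact hAmono _ _
  have hlip : ‖ν‖ ≤ LA * ‖ζ‖ := by
    rw [LinearIsometryEquiv.norm_map, hDe]; exact hAlip _ _
  have hpos : 0 ≤ ‖u₀ - Γ0 uδ‖ ^ 2 + 2 * ⟪ν, v - ζ⟫ := by
    rw [← hEe, InnerProductSpace.toDual_symm_apply, ← hΓ,
      norm_sq_add_two_mul_apply_eq E D Γt Γ0 hIBP]
    positivity
  have hθ2 : √(1 + LA ^ 2 - 2 * mA) ^ 2 = 1 + LA ^ 2 - 2 * mA :=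
    Real.sq_sqrt (by nlinarith [sq_nonneg (LA - 1)])
  rw [norm_sq_eq_norm_add_toDual_symm_sq_add E D Γt Γ0 hnorm hIBP e, hEe, hΓ,
    sub_add_eq_add_sub, add_sub_assoc]
  gcongr
  exact norm_add_sub_le_of_monotone_of_lipschitz hmA (hmA.le.trans hmL) (Real.sqrt_nonneg _) hθ2
    (by positivity) (Real.sq_sqrt (by positivity)) (norm_nonneg _) hmono hlip hpos

theorem estimator_reliable [CompleteSpace Y] (E : X →L[ℝ] Y) (D : X →L[ℝ] StrongDual ℝ Y)
    (Γt Γ0 : X →L[ℝ] H) (hnorm : ∀ x : X, ‖x‖ ^ 2 = ‖E x‖ ^ 2 + ‖D x‖ ^ 2 + ‖Γt x‖ ^ 2)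
    (hIBP : ∀ u v : X, (D u) (E v) + (D v) (E u) + ⟪Γ0 u, Γ0 v⟫ = ⟪Γt u, Γt v⟫)
    {A : Y → StrongDual ℝ Y} {LA mA : ℝ} (hLA : 0 < LA) (hmA : 0 < mA)
    (hAlip : ∀ w v : Y, ‖A w - A v‖ ≤ LA * ‖w - v‖)
    (hAmono : ∀ w v : Y, (A w - A v) (w - v) ≥ mA * ‖w - v‖ ^ 2)
    {ℓ : StrongDual ℝ Y} {u₀ : H} {u uδ : X} {lamδ : Y} (hu : D u + A (E u) = ℓ ∧ Γ0 u = u₀)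
    {lam : Y} (hlam : A lam = ℓ - D uδ) {ϱ : ℝ} (hϱ : 0 ≤ ϱ)
    (hcond : ‖lam - lamδ‖ ≤ ϱ * (‖lamδ - E uδ‖ + (√(1 + LA ^ 2) / mA) * ‖u₀ - Γ0 uδ‖)) :
    ‖u - uδ‖ ≤ 1 / min 1 (min mA (mA / LA ^ 2)) * (1 + 1 / mA)
        * √(LA ^ 2 * ϱ ^ 2 + (LA * ϱ * √(1 + LA ^ 2) / mA + 1) ^ 2)
        * √(‖lamδ - E uδ‖ ^ 2 + ‖u₀ - Γ0 uδ‖ ^ 2) := by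
  rw [mul_div_assoc]
  set p := √(1 + LA ^ 2) / mA
  set K := 1 / min 1 (min mA (mA / LA ^ 2)) * (1 + 1 / mA)
  have hK : (mA + 1) * max mA (max 1 (LA ^ 2)) ≤ K * mA ^ 2 := by
    calc _ ≤ (mA + 1) * (mA / min 1 (min mA (mA / LA ^ 2))) := by
          gcongr; exact max_le_div_min hmA hLA
      _ = K * mA ^ 2 := by simp only [K]; field_simp
  have hd : ‖lam - E uδ‖ ≤ (1 + ϱ) * ‖lamδ - E uδ‖ + ϱ * p * ‖u₀ - Γ0 uδ‖ := by
    have := norm_sub_le_norm_sub_add_norm_sub lam lamδ (E uδ)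
    linarith
  rcases le_or_gt mA LA with hmL | hLm
  · have hθ2 : √(1 + LA ^ 2 - 2 * mA) ^ 2 = 1 + LA ^ 2 - 2 * mA :=
      Real.sq_sqrt (by nlinarith [sq_nonneg (LA - 1)])
    have hw2 : √(2 * mA) ^ 2 = 2 * mA := Real.sq_sqrt (by positivity)
    have hp : 1 ≤ p := by
      rw [le_div_iff₀ hmA, one_mul]; exact Real.le_sqrt_of_sq_le (by nlinarith)
    have hK₁ : mA + 1 ≤ K * mA ^ 2 := by
      nlinarith [le_max_left 1 (LA ^ 2), le_max_right mA (max 1 (LA ^ 2))]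
    have hK₂ : (mA + 1) * LA ^ 2 ≤ K * mA ^ 2 := by
      nlinarith [le_max_right 1 (LA ^ 2), le_max_right mA (max 1 (LA ^ 2))]
    exact le_mul_sqrt_mul_sqrt_of_sq_le (norm_nonneg _) (by positivity) (by positivity)
      (by positivity) hϱ (norm_nonneg _) (norm_nonneg _) (sq_add_half_div_le_mul hmA hmL hK₁ hK₂)
      (sq_add_half_div_mul_le hmA hmL (Real.sqrt_nonneg _) hθ2 (by positivity) hw2 hp hK₁ hK₂)
      (sq_add_half_div_sq_add_sq_add_one_le hmA hmL hθ2 hw2 hK₁ hK₂) hd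
      (norm_sub_sq_le_of_residual E D Γt Γ0 hnorm hIBP hmA hmL hAlip hAmono hu hlam)
  · have hK1 : 1 ≤ K := by nlinarith [le_max_left mA (max 1 (LA ^ 2))]
    refine le_mul_sqrt_mul_sqrt_of_sq_le (C₁ := 0) (C₂ := 0) (d := 0) (norm_nonneg _) le_rfl
      le_rfl (by positivity) hϱ (norm_nonneg _) le_rfl (by positivity) (by simp; positivity)
      (by nlinarith) (by positivity) ?_
    rw [norm_sq_eq_norm_add_toDual_symm_sq_add E D Γt Γ0 hnorm hIBP,
      eq_zero_of_lipschitz_lt_monotone hLm hAlip hAmono (E _ + _), map_sub, hu.2]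
    simp

end Setting

theorem estimator_efficient_reliable_general
    {Y X H : Type*}
    [NormedAddCommGroup Y] [InnerProductSpace ℝ Y] [CompleteSpace Y]
    [NormedAddCommGroup X] [InnerProductSpace ℝ X]
    [NormedAddCommGroup H] [InnerProductSpace ℝ H]
    (E : X →L[ℝ] Y) (D : X →L[ℝ] StrongDual ℝ Y) (Γt : X →L[ℝ] H)
    (hnorm : ∀ x : X, ‖x‖ ^ 2 = ‖E x‖ ^ 2 + ‖D x‖ ^ 2 + ‖Γt x‖ ^ 2)
    (A : Y → StrongDual ℝ Y) (LA mA : ℝ) (hLA : 0 < LA) (hmA : 0 < mA)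
    (hAlip : ∀ w v : Y, ‖A w - A v‖ ≤ LA * ‖w - v‖)
    (hAmono : ∀ w v : Y, (A w - A v) (w - v) ≥ mA * ‖w - v‖ ^ 2)
    (Γ0 : X →L[ℝ] H)
    (hIBP : ∀ u v : X,
      (D u) (E v) + (D v) (E u) + ⟪Γ0 u, Γ0 v⟫ = ⟪Γt u, Γt v⟫)
    (Yδ : Submodule ℝ Y)
    (Xδ : Submodule ℝ X)
    (hEXδ : ∀ x ∈ Xδ, E x ∈ Yδ)
    (ℓ : StrongDual ℝ Y) (u₀ : H) (u : X)
    (hu : D u + A (E u) = ℓ ∧ Γ0 u = u₀)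
    (lamδ : Y) (uδ : X) (hlamδ : lamδ ∈ Yδ) (huδ : uδ ∈ Xδ)
    (hGal₁ : ∀ v ∈ Yδ, (A lamδ) v + (D uδ) v = ℓ v)
    (Ainv : StrongDual ℝ Y → Y)
    (hAinv₂ : ∀ f : StrongDual ℝ Y, A (Ainv f) = f)
    (ϱ : ℝ) (hϱ : 0 < ϱ)
    (hcond : ‖Ainv (ℓ - D uδ) - lamδ‖
      ≤ ϱ * (‖lamδ - E uδ‖ + (Real.sqrt (1 + LA ^ 2) / mA) * ‖u₀ - Γ0 uδ‖))
    (mS η : ℝ)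
    (hmS : mS = min 1 (min mA (mA / LA ^ 2)))
    (hη : η = Real.sqrt (‖lamδ - E uδ‖ ^ 2 + ‖u₀ - Γ0 uδ‖ ^ 2)) :
    (mA / Real.sqrt (1 + LA ^ 2 + mA ^ 2)) * η ≤ ‖u - uδ‖ ∧
    ‖u - uδ‖
      ≤ (1 / mS) * (1 + 1 / mA)
        * Real.sqrt (LA ^ 2 * ϱ ^ 2
            + (LA * ϱ * Real.sqrt (1 + LA ^ 2) / mA + 1) ^ 2) * η := by
  subst hmS hη
  exact ⟨estimator_efficient E D Γt Γ0 hnorm hIBP hLA.le hmA hAlip hAmono hu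
      (hGal₁ _ (Yδ.sub_mem hlamδ (hEXδ uδ huδ))),
    estimator_reliable E D Γt Γ0 hnorm hIBP hLA hmA hAlip hAmono hu (hAinv₂ _) hϱ.le hcond⟩

/-- Efficiency and reliability of the a posteriori error estimator
`η = √(‖λ^δ − E u^δ‖_Y² + ‖u₀ − Γ₀ u^δ‖_H²)` under the a posteriori
condition. -/
theorem estimator_efficient_reliable
    {Y X H : Type*}
    [NormedAddCommGroup Y] [InnerProductSpace ℝ Y] [CompleteSpace Y]
    [NormedAddCommGroup X] [InnerProductSpace ℝ X] [CompleteSpace X]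
    [NormedAddCommGroup H] [InnerProductSpace ℝ H] [CompleteSpace H]
    (E : X →L[ℝ] Y) (D : X →L[ℝ] StrongDual ℝ Y) (Γt : X →L[ℝ] H)
    (hnorm : ∀ x : X, ‖x‖ ^ 2 = ‖E x‖ ^ 2 + ‖D x‖ ^ 2 + ‖Γt x‖ ^ 2)
    (A : Y → StrongDual ℝ Y) (LA mA : ℝ) (hLA : 0 < LA) (hmA : 0 < mA)
    (hAlip : ∀ w v : Y, ‖A w - A v‖ ≤ LA * ‖w - v‖)
    (hAmono : ∀ w v : Y, (A w - A v) (w - v) ≥ mA * ‖w - v‖ ^ 2)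
    (Γ0 : X →L[ℝ] H)
    (hIBP : ∀ u v : X,
      (D u) (E v) + (D v) (E u) + ⟪Γ0 u, Γ0 v⟫ = ⟪Γt u, Γt v⟫)
    (Yδ : Submodule ℝ Y) (hYδ : IsClosed (Yδ : Set Y))
    (Xδ : Submodule ℝ X) (hXδ : IsClosed (Xδ : Set X))
    (hEXδ : ∀ x ∈ Xδ, E x ∈ Yδ)
    (ℓ : StrongDual ℝ Y) (u₀ : H) (u : X)
    (hu : D u + A (E u) = ℓ ∧ Γ0 u = u₀)
    (lamδ : Y) (uδ : X) (hlamδ : lamδ ∈ Yδ) (huδ : uδ ∈ Xδ)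
    (hGal₁ : ∀ v ∈ Yδ, (A lamδ) v + (D uδ) v = ℓ v)
    (hGal₂ : ∀ w ∈ Xδ, (D w) lamδ - (A (E uδ)) (E w) - ⟪Γt uδ, Γt w⟫
        = -(ℓ (E w)) - ⟪u₀, Γ0 w⟫)
    (Ainv : StrongDual ℝ Y → Y)
    (hAinv₁ : ∀ y : Y, Ainv (A y) = y) (hAinv₂ : ∀ f : StrongDual ℝ Y, A (Ainv f) = f)
    (ϱ : ℝ) (hϱ : 0 < ϱ)
    (hcond : ‖Ainv (ℓ - D uδ) - lamδ‖
      ≤ ϱ * (‖lamδ - E uδ‖ + (Real.sqrt (1 + LA ^ 2) / mA) * ‖u₀ - Γ0 uδ‖))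
    (mS η : ℝ)
    (hmS : mS = min 1 (min mA (mA / LA ^ 2)))
    (hη : η = Real.sqrt (‖lamδ - E uδ‖ ^ 2 + ‖u₀ - Γ0 uδ‖ ^ 2)) :
    (mA / Real.sqrt (1 + LA ^ 2 + mA ^ 2)) * η ≤ ‖u - uδ‖ ∧
    ‖u - uδ‖
      ≤ (1 / mS) * (1 + 1 / mA)
        * Real.sqrt (LA ^ 2 * ϱ ^ 2
            + (LA * ϱ * Real.sqrt (1 + LA ^ 2) / mA + 1) ^ 2) * η :=
  estimator_efficient_reliable_general E D Γt hnorm A LA mA hLA hmA hAlip hAmono Γ0 hIBP Yδ Xδ hEXδ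
    ℓ u₀ u hu lamδ uδ hlamδ huδ hGal₁ Ainv hAinv₂ ϱ hϱ hcond mS η hmS hη
end

section
/- Let (λ°, u°) ∈ Y × X satisfy N(λ°, u°) = (f, g). Let σ̂_S ∈ (σ_S, 1), C₃ := (1/σ̂_S)·((σ̂_S − σ_S)/θ_S* + 1/m_A), and let L ∈ ℕ satisfy σ_A^L·(C₃ + 1/m_A) ≤ (σ̂_S − σ_S)/θ_S*. Given any (λ⁽⁰⁾, u⁽⁰⁾) ∈ Y × X, define recursively the inexact Uzawa iterates: λ⁽ᵏ⁺¹⁾ := Φ_k^L(λ⁽ᵏ⁾), where Φ_k(ξ) := ξ − θ_A*·R_Y⁻¹(A ξ − (f − D u⁽ᵏ⁾)) and Φ_k^L denotes the L-fold composition of Φ_k, and u⁽ᵏ⁺¹⁾ := u⁽ᵏ⁾ − θ_S*·R_X⁻¹(E'(A(E u⁽ᵏ⁾)) + Γ_T'(Γ_T u⁽ᵏ⁾) + g − D^⋆ λ⁽ᵏ⁺¹⁾). Then with C₄ := max((1/C₃)·‖λ° − λ⁽⁰⁾‖_Y, ‖u° − u⁽⁰⁾‖_X), for every k ∈ ℕ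 it holds that (1/C₃)·‖λ° − λ⁽ᵏ⁾‖_Y ≤ σ̂_S^k·C₄ and ‖u° − u⁽ᵏ⁾‖_X ≤ σ̂_S^k·C₄. -/
/-!
For fixed `u`, the map `λ ↦ A λ + D u - f` is Lipschitz and strongly monotone, so it has a unique
zero `S u`, and `S` is `1/m_A`-Lipschitz. Eliminating `λ = S u` leaves the reduced operator
`T u = E'(A(E u)) + Γ_T'(Γ_T u) - D^⋆(S u)`, which is `L_S`-Lipschitz and `m_S`-strongly monotone
(by Cauchy–Schwarz against the norm identity on `X`), and `u°` solves `T u° = -g`.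
For an `L`-Lipschitz, `m`-strongly monotone operator the Zarantonello step
`ξ ↦ ξ - (m/L²) R⁻¹(T ξ - c)` contracts with factor `√(1 - m²/L²)`. So the `L` inner steps
shrink the distance of `λ` to `S u⁽ᵏ⁾` by `σ_A^L`, and the outer step is a `σ_S`-contraction
towards `u°` perturbed by `θ_S` times that inner error. The choice of `L` bounds the perturbation
by `(σ̂_S - σ_S)` times the current error, which closes an induction on the weighted errors.
-/

open NormedSpace
open scoped RealInnerProductSpace

theorem mul_norm_sub_le_of_strongly_monotone {E : Type*} [NormedAddCommGroup E]
    [NormedSpace ℝ E] {T : E → StrongDual ℝ E} {m : ℝ}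
    (hmono : ∀ w v, (T w - T v) (w - v) ≥ m * ‖w - v‖ ^ 2) (w v : E) :
    m * ‖w - v‖ ≤ ‖T w - T v‖ := by
  rcases (norm_nonneg (w - v)).eq_or_lt with h | h
  · rw [← h, mul_zero]
    exact norm_nonneg _
  · refine le_of_mul_le_mul_right ?_ h
    calc m * ‖w - v‖ * ‖w - v‖ = m * ‖w - v‖ ^ 2 := by ring
      _ ≤ (T w - T v) (w - v) := hmono w v
      _ ≤ ‖T w - T v‖ * ‖w - v‖ := (Real.le_norm_self _).trans ((T w - T v).le_opNorm _)

theorem eq_of_apply_eq_of_strongly_monotone {E : Type*} [NormedAddCommGroup E]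
    [NormedSpace ℝ E] {T : E → StrongDual ℝ E} {m : ℝ} (hm : 0 < m)
    (hmono : ∀ w v, (T w - T v) (w - v) ≥ m * ‖w - v‖ ^ 2) {w v : E} (h : T w = T v) : w = v := by
  have := mul_norm_sub_le_of_strongly_monotone hmono w v
  rw [h, sub_self, norm_zero] at this
  exact sub_eq_zero.1 (norm_le_zero_iff.1 (nonpos_of_mul_nonpos_right this hm))

theorem norm_iterate_sub_le_of_isFixedPt {E : Type*} [SeminormedAddCommGroup E] {Φ : E → E}
    {σ : ℝ} (hσ : 0 ≤ σ)
    (hΦ : ∀ x y, ‖Φ x - Φ y‖ ≤ σ * ‖x - y‖) {p : E} (hp : Function.IsFixedPt Φ p) (x : E) :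
    ∀ n : ℕ, ‖Φ^[n] x - p‖ ≤ σ ^ n * ‖x - p‖
  | 0 => by simp
  | n + 1 => by
    calc ‖Φ^[n + 1] x - p‖ = ‖Φ (Φ^[n] x) - Φ p‖ := by rw [Function.iterate_succ_apply', hp]
      _ ≤ σ * (σ ^ n * ‖x - p‖) := by
          grw [hΦ, norm_iterate_sub_le_of_isFixedPt hσ hΦ hp x n]
      _ = σ ^ (n + 1) * ‖x - p‖ := by ring

section Zarantonello

variable {Y : Type*} [NormedAddCommGroup Y] [InnerProductSpace ℝ Y] [CompleteSpace Y]

noncomputable def zarantonelloStep (T : Y → StrongDual ℝ Y) (c : StrongDual ℝ Y) (θ : ℝ)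
    (ξ : Y) : Y :=
  ξ - θ • (InnerProductSpace.toDual ℝ Y).symm (T ξ - c)

theorem zarantonelloStep_eq_self_iff {T : Y → StrongDual ℝ Y} {c : StrongDual ℝ Y} {θ : ℝ}
    (hθ : θ ≠ 0) {ξ : Y} : zarantonelloStep T c θ ξ = ξ ↔ T ξ = c := by
  rw [zarantonelloStep, sub_eq_self, smul_eq_zero_iff_right hθ,
    LinearIsometryEquiv.map_eq_zero_iff, sub_eq_zero]

theorem norm_zarantonelloStep_sub_le {T : Y → StrongDual ℝ Y} {L m : ℝ} (hL : 0 < L)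
    (hm : 0 ≤ m) (hlip : ∀ w v, ‖T w - T v‖ ≤ L * ‖w - v‖)
    (hmono : ∀ w v, (T w - T v) (w - v) ≥ m * ‖w - v‖ ^ 2) (c : StrongDual ℝ Y) (w v : Y) :
    ‖zarantonelloStep T c (m / L ^ 2) w - zarantonelloStep T c (m / L ^ 2) v‖ ≤
      √(1 - m ^ 2 / L ^ 2) * ‖w - v‖ := by
  set θ := m / L ^ 2 with hθ
  set r := (InnerProductSpace.toDual ℝ Y).symm (T w - T v)
  have hdiff : zarantonelloStep T c θ w - zarantonelloStep T c θ v = (w - v) - θ • r := by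
    simp only [zarantonelloStep, r, map_sub, smul_sub]
    abel
  have hinner : ⟪r, w - v⟫ ≥ m * ‖w - v‖ ^ 2 :=
    InnerProductSpace.toDual_symm_apply.trans_ge (hmono w v)
  have hr : ‖r‖ ≤ L * ‖w - v‖ := (LinearIsometryEquiv.norm_map _ _).trans_le (hlip w v)
  have hsq : ‖(w - v) - θ • r‖ ^ 2 ≤ (1 - m ^ 2 / L ^ 2) * ‖w - v‖ ^ 2 := by
    calc ‖(w - v) - θ • r‖ ^ 2 = ‖w - v‖ ^ 2 - 2 * θ * ⟪r, w - v⟫ + θ ^ 2 * ‖r‖ ^ 2 := by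
          rw [norm_sub_sq_real, real_inner_smul_right, norm_smul, real_inner_comm,
            Real.norm_eq_abs, mul_pow, sq_abs]
          ring
      _ ≤ ‖w - v‖ ^ 2 - 2 * θ * (m * ‖w - v‖ ^ 2) + θ ^ 2 * (L * ‖w - v‖) ^ 2 := by
          gcongr
      _ = (1 - m ^ 2 / L ^ 2) * ‖w - v‖ ^ 2 := by
          rw [hθ]
          field_simp
          ring
  rw [hdiff, ← Real.sqrt_sq (norm_nonneg _), ← Real.sqrt_sq (norm_nonneg (w - v)),
    ← Real.sqrt_mul' _ (sq_nonneg _)]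
  exact Real.sqrt_le_sqrt hsq

theorem exists_apply_eq_of_strongly_monotone {T : Y → StrongDual ℝ Y} {L m : ℝ} (hL : 0 < L)
    (hm : 0 < m) (hlip : ∀ w v, ‖T w - T v‖ ≤ L * ‖w - v‖)
    (hmono : ∀ w v, (T w - T v) (w - v) ≥ m * ‖w - v‖ ^ 2) (c : StrongDual ℝ Y) :
    ∃ p, T p = c := by
  let K : NNReal := ⟨√(1 - m ^ 2 / L ^ 2), Real.sqrt_nonneg _⟩
  have hK : ContractingWith K (zarantonelloStep T c (m / L ^ 2)) := by
    refine ⟨(Real.sqrt_lt' one_pos).2 (by simp; positivity), ?_⟩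
    refine LipschitzWith.of_dist_le_mul fun w v => ?_
    rw [dist_eq_norm, dist_eq_norm]
    exact norm_zarantonelloStep_sub_le hL hm.le hlip hmono c w v
  exact ⟨_, (zarantonelloStep_eq_self_iff (by positivity)).1 hK.fixedPoint_isFixedPt⟩

theorem norm_iterate_zarantonelloStep_sub_le {T : Y → StrongDual ℝ Y} {L m : ℝ} (hL : 0 < L)
    (hm : 0 < m) (hlip : ∀ w v, ‖T w - T v‖ ≤ L * ‖w - v‖)
    (hmono : ∀ w v, (T w - T v) (w - v) ≥ m * ‖w - v‖ ^ 2) {c : StrongDual ℝ Y} {p : Y}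
    (hp : T p = c) (x : Y) (n : ℕ) :
    ‖(zarantonelloStep T c (m / L ^ 2))^[n] x - p‖ ≤ √(1 - m ^ 2 / L ^ 2) ^ n * ‖x - p‖ :=
  norm_iterate_sub_le_of_isFixedPt (Real.sqrt_nonneg _)
    (norm_zarantonelloStep_sub_le hL hm.le hlip hmono c)
    ((zarantonelloStep_eq_self_iff (by positivity)).2 hp) x n

theorem norm_sub_sub_smul_toDual_symm_le {T : Y → StrongDual ℝ Y} {L m : ℝ} (hL : 0 < L)
    (hm : 0 ≤ m) (hlip : ∀ w v, ‖T w - T v‖ ≤ L * ‖w - v‖)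
    (hmono : ∀ w v, (T w - T v) (w - v) ≥ m * ‖w - v‖ ^ 2) {c : StrongDual ℝ Y} {p : Y}
    (hp : T p = c) (u : Y) (μ : StrongDual ℝ Y) :
    ‖p - (u - (m / L ^ 2) • (InnerProductSpace.toDual ℝ Y).symm (T u - c + μ))‖ ≤
      √(1 - m ^ 2 / L ^ 2) * ‖p - u‖ + m / L ^ 2 * ‖μ‖ := by
  have hsplit : p - (u - (m / L ^ 2) • (InnerProductSpace.toDual ℝ Y).symm (T u - c + μ)) =
      (zarantonelloStep T c (m / L ^ 2) p - zarantonelloStep T c (m / L ^ 2) u) +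
        (m / L ^ 2) • (InnerProductSpace.toDual ℝ Y).symm μ := by
    simp only [zarantonelloStep, hp, sub_self, map_zero, smul_zero, map_add, smul_add]
    abel
  rw [hsplit]
  refine norm_add_le_of_le (norm_zarantonelloStep_sub_le hL hm hlip hmono c p u) ?_
  rw [norm_smul, LinearIsometryEquiv.norm_map, Real.norm_of_nonneg (by positivity)]

end Zarantonello

section SchurComplement

variable {X Y H : Type*} [NormedAddCommGroup X] [InnerProductSpace ℝ X]
  [NormedAddCommGroup Y] [InnerProductSpace ℝ Y] [NormedAddCommGroup H] [InnerProductSpace ℝ H]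
  {E : X →L[ℝ] Y} {D : X →L[ℝ] StrongDual ℝ Y} {Γt : X →L[ℝ] H} {A : Y → StrongDual ℝ Y} {S : X → Y}

theorem sum_norm_mul_norm_le_norm_mul_norm
    (hnorm : ∀ x, ‖x‖ ^ 2 = ‖E x‖ ^ 2 + ‖D x‖ ^ 2 + ‖Γt x‖ ^ 2) (x y : X) :
    ‖E x‖ * ‖E y‖ + ‖D x‖ * ‖D y‖ + ‖Γt x‖ * ‖Γt y‖ ≤ ‖x‖ * ‖y‖ := by
  have hsq : (‖E x‖ * ‖E y‖ + ‖D x‖ * ‖D y‖ + ‖Γt x‖ * ‖Γt y‖) ^ 2 ≤ (‖x‖ * ‖y‖) ^ 2 := by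
    rw [mul_pow, hnorm x, hnorm y]
    nlinarith [sq_nonneg (‖E x‖ * ‖D y‖ - ‖D x‖ * ‖E y‖),
      sq_nonneg (‖E x‖ * ‖Γt y‖ - ‖Γt x‖ * ‖E y‖), sq_nonneg (‖D x‖ * ‖Γt y‖ - ‖Γt x‖ * ‖D y‖)]
  exact (abs_le_of_sq_le_sq' hsq (by positivity)).2

theorem solution_sub_eq {f : StrongDual ℝ Y} (hS : ∀ u, A (S u) = f - D u) (u v : X) :
    A (S u) - A (S v) = -D (u - v) := by
  rw [hS, hS, map_sub]
  abel

theorem mul_norm_solution_sub_le {f : StrongDual ℝ Y} {mA : ℝ}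
    (hAmono : ∀ w v, (A w - A v) (w - v) ≥ mA * ‖w - v‖ ^ 2) (hS : ∀ u, A (S u) = f - D u)
    (u v : X) : mA * ‖S u - S v‖ ≤ ‖D (u - v)‖ := by
  simpa only [solution_sub_eq hS, norm_neg] using
    mul_norm_sub_le_of_strongly_monotone hAmono (S u) (S v)

theorem norm_solution_sub_le {f : StrongDual ℝ Y} {mA : ℝ} (hD : ‖D‖ ≤ 1) (hmA : 0 < mA)
    (hAmono : ∀ w v, (A w - A v) (w - v) ≥ mA * ‖w - v‖ ^ 2) (hS : ∀ u, A (S u) = f - D u)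
    (u v : X) : ‖S u - S v‖ ≤ ‖u - v‖ / mA := by
  rw [le_div_iff₀' hmA]
  calc mA * ‖S u - S v‖ ≤ ‖D (u - v)‖ := mul_norm_solution_sub_le hAmono hS u v
    _ ≤ ‖u - v‖ := (D.le_of_opNorm_le hD _).trans_eq (one_mul _)

variable [CompleteSpace H]

variable (E D Γt A S)

/-- With `A (S u) = f - D u`, the saddle point system reduces to
`schurComplement E D Γt A S u = -g`. -/
noncomputable def schurComplement (u : X) : StrongDual ℝ X :=
  (A (E u)).comp E + (InnerProductSpace.toDual ℝ H (Γt u)).comp Γt - D.flip (S u)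

variable {E D Γt A S}

theorem schurComplement_sub_apply (u v w : X) :
    (schurComplement E D Γt A S u - schurComplement E D Γt A S v) w =
      (A (E u) - A (E v)) (E w) + ⟪Γt (u - v), Γt w⟫ - D w (S u - S v) := by
  simp only [schurComplement, sub_apply, add_apply,
    ContinuousLinearMap.coe_comp, Function.comp_apply, ContinuousLinearMap.flip_apply,
    InnerProductSpace.toDual_apply_apply, map_sub, inner_sub_left]
  ring

theorem norm_schurComplement_sub_le {f : StrongDual ℝ Y} {LA mA : ℝ}
    (hnorm : ∀ x, ‖x‖ ^ 2 = ‖E x‖ ^ 2 + ‖D x‖ ^ 2 + ‖Γt x‖ ^ 2) (hmA : 0 < mA)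
    (hAlip : ∀ w v, ‖A w - A v‖ ≤ LA * ‖w - v‖)
    (hAmono : ∀ w v, (A w - A v) (w - v) ≥ mA * ‖w - v‖ ^ 2) (hS : ∀ u, A (S u) = f - D u)
    (u v : X) :
    ‖schurComplement E D Γt A S u - schurComplement E D Γt A S v‖ ≤
      max 1 (max LA (1 / mA)) * ‖u - v‖ := by
  set LS := max 1 (max LA (1 / mA))
  have h1 : 1 ≤ LS := le_max_left _ _
  have hLA : LA ≤ LS := (le_max_left _ _).trans (le_max_right _ _)
  have hmA' : 1 / mA ≤ LS := (le_max_right _ _).trans (le_max_right _ _)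
  refine ContinuousLinearMap.opNorm_le_bound _ (by positivity) fun w => ?_
  have hE : |(A (E u) - A (E v)) (E w)| ≤ LA * (‖E (u - v)‖ * ‖E w‖) := by
    rw [← Real.norm_eq_abs, map_sub, ← mul_assoc]
    exact ((A (E u) - A (E v)).le_opNorm _).trans (by gcongr; exact hAlip _ _)
  have hΓ : |⟪Γt (u - v), Γt w⟫| ≤ ‖Γt (u - v)‖ * ‖Γt w‖ := abs_real_inner_le_norm _ _
  have hD : |D w (S u - S v)| ≤ 1 / mA * (‖D (u - v)‖ * ‖D w‖) := by
    rw [← Real.norm_eq_abs]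
    refine ((D w).le_opNorm _).trans ?_
    rw [one_div_mul_eq_div, le_div_iff₀ hmA]
    nlinarith [mul_norm_solution_sub_le hAmono hS u v, norm_nonneg (D w)]
  rw [schurComplement_sub_apply, Real.norm_eq_abs]
  calc _ ≤ |(A (E u) - A (E v)) (E w)| + |⟪Γt (u - v), Γt w⟫| + |D w (S u - S v)| :=
        (abs_sub _ _).trans (by gcongr; exact abs_add_le _ _)
    _ ≤ LS * (‖E (u - v)‖ * ‖E w‖ + ‖D (u - v)‖ * ‖D w‖ + ‖Γt (u - v)‖ * ‖Γt w‖) := by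
        nlinarith [mul_le_mul_of_nonneg_right hLA (by positivity : 0 ≤ ‖E (u - v)‖ * ‖E w‖),
          mul_le_mul_of_nonneg_right h1 (by positivity : 0 ≤ ‖Γt (u - v)‖ * ‖Γt w‖),
          mul_le_mul_of_nonneg_right hmA' (by positivity : 0 ≤ ‖D (u - v)‖ * ‖D w‖)]
    _ ≤ LS * ‖u - v‖ * ‖w‖ := by
        rw [mul_assoc]
        gcongr
        exact sum_norm_mul_norm_le_norm_mul_norm hnorm _ _

theorem schurComplement_strongly_monotone {f : StrongDual ℝ Y} {LA mA : ℝ}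
    (hnorm : ∀ x, ‖x‖ ^ 2 = ‖E x‖ ^ 2 + ‖D x‖ ^ 2 + ‖Γt x‖ ^ 2) (hLA : 0 < LA) (hmA : 0 < mA)
    (hAlip : ∀ w v, ‖A w - A v‖ ≤ LA * ‖w - v‖)
    (hAmono : ∀ w v, (A w - A v) (w - v) ≥ mA * ‖w - v‖ ^ 2) (hS : ∀ u, A (S u) = f - D u)
    (u v : X) :
    (schurComplement E D Γt A S u - schurComplement E D Γt A S v) (u - v) ≥
      min 1 (min mA (mA / LA ^ 2)) * ‖u - v‖ ^ 2 := by
  set mS := min 1 (min mA (mA / LA ^ 2))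
  have h1 : mS ≤ 1 := min_le_left _ _
  have hmA' : mS ≤ mA := (min_le_right _ _).trans (min_le_left _ _)
  have hmALA : mS ≤ mA / LA ^ 2 := (min_le_right _ _).trans (min_le_right _ _)
  have hE : (A (E u) - A (E v)) (E (u - v)) ≥ mA * ‖E (u - v)‖ ^ 2 := by
    rw [map_sub]
    exact hAmono _ _
  have hΓ : ⟪Γt (u - v), Γt (u - v)⟫ = ‖Γt (u - v)‖ ^ 2 := real_inner_self_eq_norm_sq _
  -- `A (S u) - A (S v) = -D (u - v)` turns the coupling term into a monotonicity term of `A`.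
  have hD : -D (u - v) (S u - S v) ≥ mA / LA ^ 2 * ‖D (u - v)‖ ^ 2 := by
    have hmono := hAmono (S u) (S v)
    have hlip := hAlip (S u) (S v)
    rw [solution_sub_eq hS, norm_neg] at hlip
    rw [solution_sub_eq hS, neg_apply] at hmono
    calc mA / LA ^ 2 * ‖D (u - v)‖ ^ 2 ≤ mA / LA ^ 2 * (LA * ‖S u - S v‖) ^ 2 := by gcongr
      _ = mA * ‖S u - S v‖ ^ 2 := by field_simp
      _ ≤ _ := hmono
  rw [schurComplement_sub_apply, hΓ, hnorm]
  nlinarith [mul_le_mul_of_nonneg_right hmA' (sq_nonneg ‖E (u - v)‖),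
    mul_le_mul_of_nonneg_right h1 (sq_nonneg ‖Γt (u - v)‖),
    mul_le_mul_of_nonneg_right hmALA (sq_nonneg ‖D (u - v)‖)]

theorem norm_sub_uzawa_update_le [CompleteSpace X] {g : StrongDual ℝ X} {LS mS : ℝ}
    (hLS : 0 < LS) (hmS : 0 ≤ mS)
    (hTlip : ∀ u v, ‖schurComplement E D Γt A S u - schurComplement E D Γt A S v‖ ≤ LS * ‖u - v‖)
    (hTmono : ∀ u v,
      (schurComplement E D Γt A S u - schurComplement E D Γt A S v) (u - v) ≥ mS * ‖u - v‖ ^ 2)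
    (hD : ‖D‖ ≤ 1) {uo : X} (hTo : schurComplement E D Γt A S uo = -g) (u : X) (μ : Y) :
    ‖uo - (u - (mS / LS ^ 2) • (InnerProductSpace.toDual ℝ X).symm
        ((A (E u)).comp E + (InnerProductSpace.toDual ℝ H (Γt u)).comp Γt + g - D.flip μ))‖ ≤
      √(1 - mS ^ 2 / LS ^ 2) * ‖uo - u‖ + mS / LS ^ 2 * ‖μ - S u‖ := by
  have hres : (A (E u)).comp E + (InnerProductSpace.toDual ℝ H (Γt u)).comp Γt + g - D.flip μ =
      schurComplement E D Γt A S u - -g + D.flip (S u - μ) := by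
    rw [schurComplement, map_sub]
    abel
  rw [hres]
  refine (norm_sub_sub_smul_toDual_symm_le hLS hmS hTlip hTmono hTo u _).trans ?_
  gcongr
  calc ‖D.flip (S u - μ)‖ ≤ 1 * ‖S u - μ‖ := D.flip.le_of_opNorm_le (D.opNorm_flip ▸ hD) _
    _ = ‖μ - S u‖ := by rw [one_mul, norm_sub_rev]

end SchurComplement

/-- `a k`, `b k`: errors of `λ⁽ᵏ⁾`, `u⁽ᵏ⁾`; `δ k`: error of the inexact inner solve. -/
theorem uzawa_error_bound {a b δ : ℕ → ℝ} {σA σS θS mA σ' C₃ : ℝ} {L : ℕ} (hσA : 0 ≤ σA)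
    (hσS : 0 ≤ σS) (hθS : 0 < θS) (hmA : 0 < mA) (hσ' : σS < σ') (hb₀ : 0 ≤ b 0)
    (hC₃ : C₃ = 1 / σ' * ((σ' - σS) / θS + 1 / mA))
    (hL : σA ^ L * (C₃ + 1 / mA) ≤ (σ' - σS) / θS)
    (hδ : ∀ k, δ k ≤ σA ^ L * (a k + b k / mA)) (ha : ∀ k, a (k + 1) ≤ b k / mA + δ k)
    (hb : ∀ k, b (k + 1) ≤ σS * b k + θS * δ k) (k : ℕ) :
    1 / C₃ * a k ≤ σ' ^ k * max (1 / C₃ * a 0) (b 0) ∧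
      b k ≤ σ' ^ k * max (1 / C₃ * a 0) (b 0) := by
  set C₄ := max (1 / C₃ * a 0) (b 0)
  have hσ'pos : 0 < σ' := hσS.trans_lt hσ'
  have hC₃pos : 0 < C₃ := by rw [hC₃]; positivity
  have hC₃σ' : C₃ * σ' = (σ' - σS) / θS + 1 / mA := by rw [hC₃]; field_simp
  rw [one_div_mul_eq_div, div_le_iff₀' hC₃pos]
  induction k with
  | zero =>
    rw [pow_zero, one_mul, ← div_le_iff₀' hC₃pos, ← one_div_mul_eq_div]
    exact ⟨le_max_left _ _, le_max_right _ _⟩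
  | succ k ih =>
    obtain ⟨hak, hbk⟩ := ih
    set e := σ' ^ k * C₄
    have he : 0 ≤ e := mul_nonneg (pow_nonneg hσ'pos.le k) (hb₀.trans (le_max_right _ _))
    have hδk : δ k ≤ (σ' - σS) / θS * e :=
      calc δ k ≤ σA ^ L * (a k + b k / mA) := hδ k
        _ ≤ σA ^ L * (C₃ * e + e / mA) := by gcongr
        _ = σA ^ L * (C₃ + 1 / mA) * e := by ring
        _ ≤ (σ' - σS) / θS * e := by gcongr
    have hpow : σ' ^ (k + 1) * C₄ = σ' * e := by ring
    rw [hpow]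
    constructor
    · calc a (k + 1) ≤ b k / mA + δ k := ha k
        _ ≤ e / mA + (σ' - σS) / θS * e := by gcongr
        _ = C₃ * (σ' * e) := by rw [← mul_assoc C₃, hC₃σ']; ring
    · calc b (k + 1) ≤ σS * b k + θS * δ k := hb k
        _ ≤ σS * e + θS * ((σ' - σS) / θS * e) := by gcongr
        _ = σ' * e := by field_simp; ring

/-- R-linear convergence of the inexact Uzawa iteration with inner and outer
Zarantonello iterations. -/
theorem inexact_uzawa_convergence
    {Y X H : Type*}
    [NormedAddCommGroup Y] [InnerProductSpace ℝ Y] [CompleteSpace Y]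
    [NormedAddCommGroup X] [InnerProductSpace ℝ X] [CompleteSpace X]
    [NormedAddCommGroup H] [InnerProductSpace ℝ H] [CompleteSpace H]
    (E : X →L[ℝ] Y) (D : X →L[ℝ] StrongDual ℝ Y) (Γt : X →L[ℝ] H)
    (hnorm : ∀ x : X, ‖x‖ ^ 2 = ‖E x‖ ^ 2 + ‖D x‖ ^ 2 + ‖Γt x‖ ^ 2)
    (A : Y → StrongDual ℝ Y) (LA mA : ℝ) (hLA : 0 < LA) (hmA : 0 < mA)
    (hAlip : ∀ w v : Y, ‖A w - A v‖ ≤ LA * ‖w - v‖)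
    (hAmono : ∀ w v : Y, (A w - A v) (w - v) ≥ mA * ‖w - v‖ ^ 2)
    (f : StrongDual ℝ Y) (g : StrongDual ℝ X)
    -- the exact solution of the saddle point system
    (lamo : Y) (uo : X)
    (hsol₁ : A lamo + D uo = f)
    (hsol₂ : D.flip lamo - (A (E uo)).comp E -
        (InnerProductSpace.toDual ℝ H (Γt uo)).comp Γt = g)
    -- the constants
    (LS mS θA σA θS σS : ℝ)
    (hLS : LS = max 1 (max LA (1 / mA)))
    (hmS : mS = min 1 (min mA (mA / LA ^ 2)))
    (hθA : θA = mA / LA ^ 2) (hσA : σA = Real.sqrt (1 - mA ^ 2 / LA ^ 2))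
    (hθS : θS = mS / LS ^ 2) (hσS : σS = Real.sqrt (1 - mS ^ 2 / LS ^ 2))
    (σS' C₃ : ℝ) (hσS' : σS < σS' ∧ σS' < 1)
    (hC₃ : C₃ = (1 / σS') * ((σS' - σS) / θS + 1 / mA))
    (L : ℕ) (hL : σA ^ L * (C₃ + 1 / mA) ≤ (σS' - σS) / θS)
    -- the inexact Uzawa iterates (with arbitrary initial values `lam 0`, `us 0`)
    (lam : ℕ → Y) (us : ℕ → X)
    (hlamrec : ∀ k : ℕ, lam (k + 1) =
      (fun ξ : Y => ξ - θA • (InnerProductSpace.toDual ℝ Y).symm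
        (A ξ - (f - D (us k))))^[L] (lam k))
    (husrec : ∀ k : ℕ, us (k + 1) =
      us k - θS • (InnerProductSpace.toDual ℝ X).symm
        ((A (E (us k))).comp E + (InnerProductSpace.toDual ℝ H (Γt (us k))).comp Γt
          + g - D.flip (lam (k + 1))))
    (C₄ : ℝ)
    (hC₄ : C₄ = max ((1 / C₃) * ‖lamo - lam 0‖) ‖uo - us 0‖) :
    ∀ k : ℕ,
      (1 / C₃) * ‖lamo - lam k‖ ≤ σS' ^ k * C₄ ∧
      ‖uo - us k‖ ≤ σS' ^ k * C₄ := by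
  subst hLS hmS hθA hσA hθS hσS hC₄
  intro k
  choose S hS using fun u => exists_apply_eq_of_strongly_monotone hLA hmA hAlip hAmono (f - D u)
  have hSo : S uo = lamo :=
    eq_of_apply_eq_of_strongly_monotone hmA hAmono (by rw [hS, ← hsol₁, add_sub_cancel_right])
  have hD : ‖D‖ ≤ 1 := D.opNorm_le_bound zero_le_one fun x => by
    nlinarith [hnorm x, norm_nonneg x, norm_nonneg (D x)]
  have hSo_le : ∀ u, ‖lamo - S u‖ ≤ ‖uo - u‖ / mA := fun u =>
    hSo ▸ norm_solution_sub_le hD hmA hAmono hS uo u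
  have hTo : schurComplement E D Γt A S uo = -g := by
    rw [← hsol₂, schurComplement, hSo]
    abel
  refine uzawa_error_bound (a := fun k => ‖lamo - lam k‖) (b := fun k => ‖uo - us k‖)
    (δ := fun k => ‖lam (k + 1) - S (us k)‖) (Real.sqrt_nonneg _) (Real.sqrt_nonneg _)
    (by positivity) hmA hσS'.1 (norm_nonneg _) hC₃ hL (fun k => ?_) (fun k => ?_) (fun k => ?_) k
  · rw [hlamrec k]
    refine (norm_iterate_zarantonelloStep_sub_le hLA hmA hAlip hAmono (hS (us k)) _ _).trans ?_
    gcongr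
    refine (norm_sub_le_norm_sub_add_norm_sub _ lamo _).trans ?_
    rw [norm_sub_rev]
    gcongr
    exact hSo_le _
  · refine (norm_sub_le_norm_sub_add_norm_sub _ (S (us k)) _).trans ?_
    rw [norm_sub_rev (S _)]
    gcongr
    exact hSo_le _
  · rw [husrec k]
    exact norm_sub_uzawa_update_le (lt_max_of_lt_left one_pos) (by positivity)
      (norm_schurComplement_sub_le hnorm hmA hAlip hAmono hS)
      (schurComplement_strongly_monotone hnorm hLA hmA hAlip hAmono hS) hD hTo _ _
end
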